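/- arXiv:1901.02673 — 6 statements merged into one kernel-verified Lean document; each statement's English description precedes it below -/
import Mathlib

section
/- The distribution function A of a measurable function v satisfies A'(v̄(s)) ≤ 1 for almost every s ∈ (0,|Ω|); moreover, at almost every s where v̄'(s) ≠ 0 one has A'(v̄(s)) = 1/v̄'(s). -/
open MeasureTheory Set

/-- If `f` is antitone on a neighborhood of `x`, then `deriv f x ≤ 0`. -/
lemma aux_deriv_nonpos_of_antitone_nhds {f : ℝ → ℝ} {x : ℝ} {U : Set ℝ} (hU : U ∈ nhds x)
    (hf : ∀ a ∈ U, ∀ b ∈ U, a ≤ b → f b ≤ f a) : deriv f x ≤ 0 := by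
  by_cases hdf : DifferentiableAt ℝ f x
  · have h := hasDerivAt_iff_tendsto_slope.1 hdf.hasDerivAt
    refine le_of_tendsto h ?_
    have hxU : x ∈ U := mem_of_mem_nhds hU
    filter_upwards [self_mem_nhdsWithin, nhdsWithin_le_nhds hU] with y hy hyU
    have hyx : y ≠ x := hy
    rw [slope_def_field]
    rcases hyx.lt_or_gt with h1 | h1
    · apply div_nonpos_of_nonneg_of_nonpos
      · have := hf y hyU x hxU h1.le; linarith
      · linarith
    · apply div_nonpos_of_nonpos_of_nonneg
      · have := hf x hxU y hyU h1.le; linarith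
      · linarith
  · rw [deriv_zero_of_not_differentiableAt hdf]

set_option maxHeartbeats 2000000 in
/-- Relation between the derivative of the distribution function and of the
decreasing rearrangement. -/
theorem stmt_3 {N : ℕ} (Ω : Set (EuclideanSpace ℝ (Fin N)))
    (hΩm : MeasurableSet Ω) (hΩb : Bornology.IsBounded Ω)
    (v : EuclideanSpace ℝ (Fin N) → ℝ) (hv : Measurable v)
    (A : ℝ → ℝ) (hA : ∀ t, A t = (volume {x ∈ Ω | |v x| > t}).toReal)
    (vbar : ℝ → ℝ) (hvbar : ∀ s, vbar s = sInf {t : ℝ | 0 ≤ t ∧ A t < s}) :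
    ∀ᵐ s ∂(volume.restrict (Ioo (0 : ℝ) (volume Ω).toReal)),
      deriv A (vbar s) ≤ 1 ∧
        (deriv vbar s ≠ 0 → deriv A (vbar s) = 1 / deriv vbar s) := by
  -- basic measure facts
  have hμfin : ∀ t : ℝ, volume {x ∈ Ω | |v x| > t} ≠ ⊤ := fun t =>
    ((measure_mono (Set.sep_subset _ _)).trans_lt hΩb.measure_lt_top).ne
  have hAnn : ∀ t, 0 ≤ A t := fun t => by rw [hA]; exact ENNReal.toReal_nonneg
  have hAanti : Antitone A := by
    intro t₁ t₂ h
    rw [hA, hA]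
    exact ENNReal.toReal_mono (hμfin t₁)
      (measure_mono fun x hx => ⟨hx.1, lt_of_le_of_lt h hx.2⟩)
  -- nonemptiness of the level sets defining vbar
  have hne : ∀ s' : ℝ, 0 < s' → {t : ℝ | 0 ≤ t ∧ A t < s'}.Nonempty := by
    intro s' hs'
    have hmeas : ∀ n : ℕ, NullMeasurableSet {x ∈ Ω | |v x| > (n : ℝ)} volume := by
      intro n
      have : {x ∈ Ω | |v x| > (n : ℝ)} = Ω ∩ {x | (n : ℝ) < |v x|} := rfl
      rw [this]
      exact (hΩm.inter (measurableSet_lt measurable_const hv.abs)).nullMeasurableSet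
    have hmono : Antitone (fun n : ℕ => {x ∈ Ω | |v x| > (n : ℝ)}) := by
      intro n m h x hx
      exact ⟨hx.1, lt_of_le_of_lt (Nat.cast_le.2 h) hx.2⟩
    have hint : (⋂ n : ℕ, {x ∈ Ω | |v x| > (n : ℝ)}) = ∅ := by
      refine Set.eq_empty_iff_forall_notMem.2 fun x hx => ?_
      obtain ⟨n, hn⟩ := exists_nat_gt |v x|
      exact absurd (Set.mem_iInter.1 hx n).2 (not_lt.2 hn.le)
    have hconv := tendsto_measure_iInter_atTop hmeas hmono ⟨0, by simpa using hμfin 0⟩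
    rw [hint, measure_empty] at hconv
    have hev : ∀ᶠ n : ℕ in Filter.atTop,
        volume {x ∈ Ω | |v x| > (n : ℝ)} < ENNReal.ofReal s' :=
      hconv.eventually_lt_const (ENNReal.ofReal_pos.2 hs')
    obtain ⟨n, hn⟩ := hev.exists
    refine ⟨(n : ℝ), Nat.cast_nonneg n, ?_⟩
    rw [hA]
    calc (volume {x ∈ Ω | |v x| > (n : ℝ)}).toReal
        < (ENNReal.ofReal s').toReal := by
          exact (ENNReal.toReal_lt_toReal (hμfin _) ENNReal.ofReal_ne_top).2 hn
      _ = s' := ENNReal.toReal_ofReal hs'.le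
  have hbdd : ∀ s' : ℝ, BddBelow {t : ℝ | 0 ≤ t ∧ A t < s'} := fun s' => ⟨0, fun t ht => ht.1⟩
  have hvb_le : ∀ {t s' : ℝ}, 0 ≤ t → A t < s' → vbar s' ≤ t := by
    intro t s' ht hAt; rw [hvbar]; exact csInf_le (hbdd s') ⟨ht, hAt⟩
  have hvb_nn : ∀ s', 0 ≤ vbar s' := fun s' => by
    rw [hvbar]; exact Real.sInf_nonneg fun t ht => ht.1
  have hle_vb : ∀ {t s' : ℝ}, 0 < s' → (∀ t', 0 ≤ t' → A t' < s' → t ≤ t') → t ≤ vbar s' := by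
    intro t s' hs' h; rw [hvbar]
    exact le_csInf (hne s' hs') fun t' ht' => h t' ht'.1 ht'.2
  have hlt_vb : ∀ {t s' : ℝ}, 0 < s' → vbar s' < t → ∃ t'', 0 ≤ t'' ∧ A t'' < s' ∧ t'' < t := by
    intro t s' hs' hlt; rw [hvbar] at hlt
    obtain ⟨t'', ht'', hlt'⟩ := exists_lt_of_csInf_lt (hne s' hs') hlt
    exact ⟨t'', ht''.1, ht''.2, hlt'⟩
  -- the null exceptional set
  have hZ : volume (Set.range fun q : ℚ => A (q : ℝ)) = 0 :=
    (Set.countable_range _).measure_zero _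
  filter_upwards [ae_restrict_mem measurableSet_Ioo,
    ae_restrict_of_ae (measure_eq_zero_iff_ae_notMem.1 hZ)] with s hsmem hsZ
  have hs0 : (0 : ℝ) < s := hsmem.1
  constructor
  · -- deriv A (vbar s) ≤ 1 since A is antitone
    have := aux_deriv_nonpos_of_antitone_nhds (f := A) (x := vbar s) (U := Set.univ)
      Filter.univ_mem (fun a _ b _ hab => hAanti hab)
    linarith
  · intro hd
    have hdiff : DifferentiableAt ℝ vbar s := by
      by_contra hc; exact hd (deriv_zero_of_not_differentiableAt hc)
    set T := vbar s with hTdef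
    set d := deriv vbar s with hddef
    have hT0 : 0 ≤ T := hvb_nn s
    have hd0 : d < 0 := by
      refine lt_of_le_of_ne ?_ hd
      refine aux_deriv_nonpos_of_antitone_nhds (U := Set.Ioi 0) (Ioi_mem_nhds hs0) ?_
      intro a ha b hb hab
      rw [hvbar, hvbar]
      exact csInf_le_csInf (hbdd b) (hne a ha)
        (fun t ht => ⟨ht.1, lt_of_lt_of_le ht.2 hab⟩)
    have hslope := hasDerivAt_iff_tendsto_slope.1 hdiff.hasDerivAt
    rw [Metric.tendsto_nhdsWithin_nhds] at hslope
    rw [← hddef] at hslope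
    clear_value T d
    -- key expansion of vbar near s
    have key : ∀ ε' : ℝ, 0 < ε' → ∃ ρ : ℝ, 0 < ρ ∧ ρ ≤ s / 2 ∧
        ∀ h : ℝ, h ≠ 0 → |h| ≤ ρ → |vbar (s + h) - T - d * h| ≤ ε' * |h| := by
      intro ε' hε'
      obtain ⟨ρ₀, hρ₀, hρ⟩ := hslope ε' hε'
      refine ⟨min (ρ₀ / 2) (s / 2), by positivity, min_le_right _ _, ?_⟩
      intro h hh0 hhρ
      have h1 : s + h ∈ ({s}ᶜ : Set ℝ) := by
        simp only [Set.mem_compl_iff, Set.mem_singleton_iff]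
        intro hc; exact hh0 (by linarith)
      have h2 : dist (s + h) s < ρ₀ := by
        rw [Real.dist_eq]
        have : s + h - s = h := by ring
        rw [this]
        calc |h| ≤ min (ρ₀ / 2) (s / 2) := hhρ
          _ ≤ ρ₀ / 2 := min_le_left _ _
          _ < ρ₀ := by linarith
      have h3 := hρ h1 h2
      rw [Real.dist_eq, slope_def_field] at h3
      have hsh : s + h - s = h := by ring
      rw [hsh] at h3
      have habs : |vbar (s + h) - T - d * h| = |(vbar (s + h) - vbar s) / h - d| * |h| := by
        rw [hTdef, ← abs_mul]
        congr 1
        field_simp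
      rw [habs]
      exact mul_le_mul_of_nonneg_right h3.le (abs_nonneg h)
    -- first: A T = s
    obtain ⟨ρ₁, hρ₁, hρ₁s, hexp₁⟩ := key (-d / 2) (by linarith)
    have hATge : s ≤ A T := by
      by_contra hc; push_neg at hc
      set h := min ρ₁ ((s - A T) / 2) with hhdef
      have hhpos : 0 < h := lt_min hρ₁ (by linarith)
      have he := hexp₁ (-h) (neg_ne_zero.2 hhpos.ne')
        (by rw [abs_neg, abs_of_pos hhpos]; exact min_le_left _ _)
      rw [abs_neg, abs_of_pos hhpos] at he
      have he1 := (abs_le.1 he).1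
      have hge : T < vbar (s + -h) := by nlinarith
      have hAh : A T < s - h := by
        have : h ≤ (s - A T) / 2 := min_le_right _ _
        linarith
      have : vbar (s + -h) ≤ T := by
        have := hvb_le (t := T) (s' := s + -h) hT0 (by linarith)
        exact this
      linarith
    have hATle : A T ≤ s := by
      by_contra hc; push_neg at hc
      set h := min ρ₁ ((A T - s) / 2) with hhdef
      have hhpos : 0 < h := lt_min hρ₁ (by linarith)
      have he := hexp₁ h hhpos.ne' (by rw [abs_of_pos hhpos]; exact min_le_left _ _)
      rw [abs_of_pos hhpos] at he
      have he2 := (abs_le.1 he).2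
      have hlt : vbar (s + h) < T := by nlinarith
      have hge : T ≤ vbar (s + h) := by
        refine hle_vb (by linarith) ?_
        intro t' ht'0 hAt'
        by_contra hc2; push_neg at hc2
        have h1 : A T ≤ A t' := hAanti hc2.le
        have h2 : h ≤ (A T - s) / 2 := min_le_right _ _
        linarith
      linarith
    have hATs : A T = s := le_antisymm hATle hATge
    -- main: HasDerivAt A (1/d) T
    suffices hAd : HasDerivAt A (1 / d) T by rw [hAd.deriv]
    rw [hasDerivAt_iff_tendsto_slope, Metric.tendsto_nhdsWithin_nhds]
    intro ε hε
    have hd2 : 0 < d ^ 2 := by nlinarith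
    set ε' := min (-d / 2) (ε * d ^ 2 / 4) with hε'def
    have hε'pos : 0 < ε' := lt_min (by linarith) (by positivity)
    have hε'le : ε' ≤ -d / 2 := min_le_left _ _
    have hε'le2 : ε' ≤ ε * d ^ 2 / 4 := min_le_right _ _
    clear_value ε'
    obtain ⟨ρ, hρpos, hρs, hexp⟩ := key ε' hε'pos
    have hδr : T < vbar (s - ρ) := by
      have he := hexp (-ρ) (neg_ne_zero.2 hρpos.ne') (by rw [abs_neg, abs_of_pos hρpos])
      rw [abs_neg, abs_of_pos hρpos] at he
      have he1 := (abs_le.1 he).1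
      have : s + -ρ = s - ρ := by ring
      rw [this] at he1
      nlinarith
    have hδl : vbar (s + ρ) < T := by
      have he := hexp ρ hρpos.ne' (by rw [abs_of_pos hρpos])
      rw [abs_of_pos hρpos] at he
      have he2 := (abs_le.1 he).2
      nlinarith
    refine ⟨min (vbar (s - ρ) - T) (T - vbar (s + ρ)), lt_min (by linarith) (by linarith), ?_⟩
    intro t htne htd
    have htne' : t ≠ T := htne
    rw [Real.dist_eq] at htd
    have habs := abs_lt.1 htd
    have hmin1 : min (vbar (s - ρ) - T) (T - vbar (s + ρ)) ≤ vbar (s - ρ) - T := min_le_left _ _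
    have hmin2 : min (vbar (s - ρ) - T) (T - vbar (s + ρ)) ≤ T - vbar (s + ρ) := min_le_right _ _
    rw [Real.dist_eq, slope_def_field, hATs]
    rcases htne'.lt_or_gt with hlt | hgt
    · -- case t < T
      have htl : vbar (s + ρ) < t := by linarith [habs.1]
      have ht0 : 0 ≤ t := (hvb_nn _).trans htl.le
      have hu_lt : A t < s + ρ := by
        obtain ⟨t'', ht''0, ht''A, ht''lt⟩ := hlt_vb (by linarith) htl
        exact lt_of_le_of_lt (hAanti ht''lt.le) ht''A
      have hu_ge : s ≤ A t := hATs ▸ hAanti hlt.le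
      have hu_ne : A t ≠ s := by
        intro hcc
        obtain ⟨q, hq1, hq2⟩ := exists_rat_btwn hlt
        refine hsZ ⟨q, le_antisymm ?_ ?_⟩
        · rw [← hcc]; exact hAanti hq1.le
        · rw [← hATs]; exact hAanti hq2.le
      obtain ⟨h, hhdef⟩ : ∃ h : ℝ, h = A t - s := ⟨_, rfl⟩
      have hAt : A t = s + h := by rw [hhdef]; ring
      have hhpos : 0 < h := by
        have := lt_of_le_of_ne hu_ge (Ne.symm hu_ne); linarith [hhdef]
      have hhρ : h < ρ := by rw [hhdef]; linarith
      have hub : t ≤ vbar (s + h) := by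
        refine hle_vb (by linarith) ?_
        intro t' ht'0 hAt'
        by_contra hc2; push_neg at hc2
        have := hAanti hc2.le
        linarith [hAt]
      have hubT : t - T ≤ (d + ε') * h := by
        have he := hexp h hhpos.ne' (by rw [abs_of_pos hhpos]; exact hhρ.le)
        rw [abs_of_pos hhpos] at he
        have he2 := (abs_le.1 he).2
        linarith [hub]
      have hlbT : (d - ε') * h ≤ t - T := by
        by_contra hc2; push_neg at hc2
        have hcd : 0 < ε' - d := by linarith
        obtain ⟨x, hxdef⟩ : ∃ x : ℝ, x = (T - t) / (ε' - d) := ⟨_, rfl⟩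
        have hx2 : (ε' - d) * x = T - t := by rw [hxdef]; field_simp
        have hxh : h < x := by nlinarith [mul_pos hcd hhpos]
        obtain ⟨h', hh'def⟩ : ∃ h' : ℝ, h' = min ρ ((h + x) / 2) := ⟨_, rfl⟩
        have hh'h : h < h' := by rw [hh'def]; exact lt_min hhρ (by linarith)
        have hh'pos : 0 < h' := hhpos.trans hh'h
        have hh'ρ : h' ≤ ρ := by rw [hh'def]; exact min_le_left _ _
        have hh'x : h' < x := by
          have : h' ≤ (h + x) / 2 := by rw [hh'def]; exact min_le_right _ _
          linarith
        have hv1 : vbar (s + h') ≤ t := hvb_le ht0 (by rw [hAt]; linarith)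
        have he := hexp h' hh'pos.ne' (by rw [abs_of_pos hh'pos]; exact hh'ρ)
        rw [abs_of_pos hh'pos] at he
        have he1 := (abs_le.1 he).1
        -- vbar (s + h') ≥ T + d h' - ε' h' = T - (ε'-d) h' > T - (ε'-d) x = t
        have hp : (ε' - d) * h' < (ε' - d) * x := by
          exact mul_lt_mul_of_pos_left hh'x hcd
        linarith
      -- conclude
      have htT : t - T < 0 := by linarith
      have hDpos : 0 < (t - T) * d := mul_pos_of_neg_of_neg htT hd0
      have h1 : t - T ≠ 0 := by intro hc; exact htne' (by linarith)
      have heq : (A t - s) / (t - T) - 1 / d = (d * h - (t - T)) / ((t - T) * d) := by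
        have h2 : A t - s = h := by rw [hAt]; ring
        rw [h2, div_sub_div _ _ h1 hd]
        congr 1
        ring
      rw [heq, abs_div, abs_of_pos hDpos]
      rw [div_lt_iff₀ hDpos]
      have hnum : |d * h - (t - T)| ≤ ε' * h := by
        rw [abs_le]
        constructor <;> linarith [hubT, hlbT]
      have hp1 : (d + ε') * h ≤ d / 2 * h := by
        have : d + ε' ≤ d / 2 := by linarith
        exact mul_le_mul_of_nonneg_right this hhpos.le
      have hDge : d ^ 2 / 2 * h ≤ (t - T) * d := by
        nlinarith [mul_le_mul_of_nonpos_right (hubT.trans hp1) hd0.le]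
      calc |d * h - (t - T)| ≤ ε' * h := hnum
        _ < ε * ((t - T) * d) := by
          nlinarith [mul_le_mul_of_nonneg_right hε'le2 hhpos.le,
            mul_le_mul_of_nonneg_left hDge hε.le, mul_pos hε hDpos]
    · -- case t > T
      have htr : t < vbar (s - ρ) := by linarith [habs.2]
      have ht0 : 0 ≤ t := hT0.trans hgt.le
      have hu_ge : s - ρ ≤ A t := by
        by_contra hc2; push_neg at hc2
        have := hvb_le ht0 hc2
        linarith
      have hu_le : A t ≤ s := hATs ▸ hAanti hgt.le
      have hu_ne : A t ≠ s := by
        intro hcc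
        obtain ⟨q, hq1, hq2⟩ := exists_rat_btwn hgt
        refine hsZ ⟨q, le_antisymm ?_ ?_⟩
        · rw [← hATs]; exact hAanti hq1.le
        · rw [← hcc]; exact hAanti hq2.le
      obtain ⟨h, hhdef⟩ : ∃ h : ℝ, h = s - A t := ⟨_, rfl⟩
      have hAt : A t = s - h := by rw [hhdef]; ring
      have hhpos : 0 < h := by
        have := lt_of_le_of_ne hu_le hu_ne; linarith [hhdef]
      have hhρ : h ≤ ρ := by rw [hhdef]; linarith
      have hsh_pos : 0 < s - h := by
        have : h ≤ s / 2 := hhρ.trans hρs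
        linarith
      have hub : t ≤ vbar (s - h) := by
        have : s - h = s + -h := by ring
        rw [this]
        refine hle_vb (by linarith) ?_
        intro t' ht'0 hAt'
        by_contra hc2; push_neg at hc2
        have := hAanti hc2.le
        have h9 : s + -h = A t := by rw [hAt]; ring
        linarith
      have hubT : t - T ≤ (-d + ε') * h := by
        have he := hexp (-h) (neg_ne_zero.2 hhpos.ne')
          (by rw [abs_neg, abs_of_pos hhpos]; exact hhρ)
        rw [abs_neg, abs_of_pos hhpos] at he
        have he2 := (abs_le.1 he).2
        have : s + -h = s - h := by ring
        rw [this] at he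
        have he2' := (abs_le.1 he).2
        linarith [hub]
      have hlbT : (-d - ε') * h ≤ t - T := by
        by_contra hc2; push_neg at hc2
        have hcd : 0 < -d - ε' := by linarith
        obtain ⟨x, hxdef⟩ : ∃ x : ℝ, x = (t - T) / (-d - ε') := ⟨_, rfl⟩
        have hx2 : (-d - ε') * x = t - T := by rw [hxdef]; field_simp
        have hx0 : 0 ≤ x := by rw [hxdef]; exact div_nonneg (by linarith) hcd.le
        have hxh : x < h := by nlinarith [mul_pos hcd hhpos]
        obtain ⟨h', hh'def⟩ : ∃ h' : ℝ, h' = (x + h) / 2 := ⟨_, rfl⟩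
        have hh'x : x < h' := by rw [hh'def]; linarith
        have hh'h : h' < h := by rw [hh'def]; linarith
        have hh'pos : 0 < h' := lt_of_le_of_lt hx0 hh'x
        have hh'ρ : h' ≤ ρ := hh'h.le.trans hhρ
        have hv1 : vbar (s - h') ≤ t := by
          refine hvb_le ht0 ?_
          rw [hAt]
          linarith
        have he := hexp (-h') (neg_ne_zero.2 hh'pos.ne')
          (by rw [abs_neg, abs_of_pos hh'pos]; exact hh'ρ)
        rw [abs_neg, abs_of_pos hh'pos] at he
        have : s + -h' = s - h' := by ring
        rw [this] at he
        have he1 := (abs_le.1 he).1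
        -- vbar (s - h') ≥ T + d(-h') - ε' h' = T + (-d - ε') h' > T + (-d - ε') x = t
        have hp : (-d - ε') * x < (-d - ε') * h' := mul_lt_mul_of_pos_left hh'x hcd
        linarith
      -- conclude
      have htT : 0 < t - T := by linarith
      have hDpos : 0 < (t - T) * (-d) := mul_pos htT (by linarith)
      have h1 : t - T ≠ 0 := by intro hc; exact htne' (by linarith)
      have hDneg : (t - T) * d < 0 := mul_neg_of_pos_of_neg htT hd0
      have heq : (A t - s) / (t - T) - 1 / d = (-h * d - (t - T)) / ((t - T) * d) := by
        have h2 : A t - s = -h := by rw [hAt]; ring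
        rw [h2, div_sub_div _ _ h1 hd]
        congr 1
        ring
      rw [heq, abs_div, abs_of_neg hDneg]
      rw [div_lt_iff₀ (by linarith : (0:ℝ) < -((t - T) * d))]
      have hnum : |-h * d - (t - T)| ≤ ε' * h := by
        rw [abs_le]
        constructor <;> linarith [hubT, hlbT]
      have hp1 : -d / 2 * h ≤ (-d - ε') * h := by
        have : -d / 2 ≤ -d - ε' := by linarith
        exact mul_le_mul_of_nonneg_right this hhpos.le
      have hDge : d ^ 2 / 2 * h ≤ (t - T) * (-d) := by
        nlinarith [mul_le_mul_of_nonneg_right (hp1.trans hlbT) (by linarith : (0:ℝ) ≤ -d)]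
      calc |-h * d - (t - T)| ≤ ε' * h := hnum
        _ < ε * -((t - T) * d) := by
          nlinarith [mul_le_mul_of_nonneg_right hε'le2 hhpos.le,
            mul_le_mul_of_nonneg_left hDge hε.le, mul_pos hε hDpos]
end

section
/- Let v : Ω → ℝ be measurable, g ∈ L¹(Ω) with g ≥ 0, and Ω(s) the nested set-valued map associated to v with |Ω(s)| = s. Then s ↦ ∫_{Ω(s)} g dx is absolutely continuous on (0,|Ω|); denoting its derivative by D(s), one has ∫₀ᵗ D(s) ds = ∫_{Ω(t)} g dx ≤ ∫₀ᵗ ḡ(s) ds for every t ∈ (0,|Ω|), where ḡ is the decreasing rearrangement of g. -/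
open MeasureTheory Set Filter

/-!
Since the sets `F t` are nested with `|F t \ F s| = t - s`, disjoint intervals `(aᵢ, bᵢ]` of total
length `< δ` give disjoint sets `F bᵢ \ F aᵢ` of total measure `< δ`; so absolute continuity of
`t ↦ ∫_{F t} g` is absolute continuity of the Lebesgue integral, and the fundamental theorem of
calculus for absolutely continuous functions provides `D` with `∫₀ᵗ D = ∫_{F t} g`.

The bound is the Hardy–Littlewood inequality `∫_E |g| ≤ ∫₀^{|E|} ḡ`: by the layer cake formula
both sides are integrals over `r > 0`, of `|E ∩ {|g| > r}|` and of
`|{s < |E| : ḡ s > r}| = min (|E|, |{|g| > r}|)` respectively.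
-/

/-- Decreasing rearrangement of `g` on `Ω`. -/
noncomputable def rearr {N : ℕ} (Ω : Set (EuclideanSpace ℝ (Fin N)))
    (g : EuclideanSpace ℝ (Fin N) → ℝ) (s : ℝ) : ℝ :=
  sInf {t : ℝ | 0 ≤ t ∧ (volume {x ∈ Ω | |g x| > t}).toReal < s}

theorem disjoint_sdiff_of_disjoint_Ioc {β : Type*} {F : ℝ → Set β} (hF : Monotone F)
    {a b c d : ℝ} (hab : a ≤ b) (hcd : c ≤ d) (h : Disjoint (Ioc a b) (Ioc c d)) :
    Disjoint (F b \ F a) (F d \ F c) := by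
  rcases hab.eq_or_lt with rfl | hab
  · simp
  rcases hcd.eq_or_lt with rfl | hcd
  · simp
  rw [Ioc_disjoint_Ioc, min_le_iff, le_max_iff, le_max_iff] at h
  rcases h with (hba | hbc) | (hda | hdc)
  · exact absurd hba hab.not_ge
  · exact disjoint_sdiff_right.mono_left (sdiff_subset.trans (hF hbc))
  · exact (disjoint_sdiff_right.mono_left (sdiff_subset.trans (hF hda))).symm
  · exact absurd hdc hcd.not_ge

theorem absolutelyContinuousOnInterval_of_sum_abs_sub_lt {f : ℝ → ℝ} {a b : ℝ} (hab : a ≤ b)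
    (hf : ∀ ε > (0 : ℝ), ∃ δ > (0 : ℝ), ∀ (n : ℕ) (l r : Fin n → ℝ),
      (∀ i, a ≤ l i ∧ l i ≤ r i ∧ r i ≤ b) →
      Pairwise (fun i j => Disjoint (Ioc (l i) (r i)) (Ioc (l j) (r j))) →
      ∑ i, (r i - l i) < δ → ∑ i, |f (r i) - f (l i)| < ε) :
    AbsolutelyContinuousOnInterval f a b := by
  rw [absolutelyContinuousOnInterval_iff]
  intro ε hε
  obtain ⟨δ, hδ, hfδ⟩ := hf ε hε
  refine ⟨δ, hδ, fun ⟨n, I⟩ ⟨hI, hdisj⟩ hsum => ?_⟩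
  have hdist : ∀ x y : ℝ, dist (f x) (f y) = |f (max x y) - f (min x y)| := by
    intro x y
    rcases le_total x y with hxy | hyx
    · simp [hxy, Real.dist_eq, abs_sub_comm]
    · simp [hyx, Real.dist_eq]
  simp only [Finset.sum_range, Real.dist_eq, ← max_sub_min_eq_abs'] at hsum
  simp only [Finset.sum_range, hdist]
  refine hfδ n (fun i => min (I i).1 (I i).2) (fun i => max (I i).1 (I i).2) (fun i => ?_)
    (fun i j hij => hdisj (Finset.mem_range.2 i.2) (Finset.mem_range.2 j.2)
      (Fin.val_ne_of_ne hij)) hsum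
  obtain ⟨hl, hr⟩ := hI i (Finset.mem_range.2 i.2)
  rw [uIcc_of_le hab] at hl hr
  exact ⟨le_min hl.1 hr.1, min_le_max, max_le hl.2 hr.2⟩

theorem MeasureTheory.IntegrableOn.exists_pos_forall_setIntegral_abs_lt {α : Type*}
    [MeasurableSpace α] {μ : Measure α} {g : α → ℝ} {T : Set α} (hg : IntegrableOn g T μ)
    {ε : ℝ} (hε : 0 < ε) :
    ∃ δ > (0 : ℝ), ∀ S ⊆ T, μ S < ENNReal.ofReal δ → ∫ x in S, |g x| ∂μ < ε := by
  obtain ⟨η, hη, hηε⟩ := exists_pos_setLIntegral_lt_of_measure_lt (μ := μ.restrict T)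
    (f := fun x => ‖g x‖ₑ) hg.2.ne (ENNReal.ofReal_pos.2 hε).ne'
  obtain ⟨δ, -, hδ, hδη⟩ := ENNReal.lt_iff_exists_real_btwn.1 hη
  refine ⟨δ, ENNReal.ofReal_pos.1 hδ, fun S hST hS => ?_⟩
  have hlt := hηε S ((Measure.restrict_apply_le _ _).trans_lt (hS.trans hδη))
  rw [Measure.restrict_restrict_of_subset hST] at hlt
  simp only [← Real.norm_eq_abs]
  rw [integral_norm_eq_lintegral_enorm (hg.mono_set hST).aestronglyMeasurable]
  exact ENNReal.toReal_lt_of_lt_ofReal hlt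

structure IsNestedVolumeFamily {α : Type*} [MeasurableSpace α] (μ : Measure α)
    (F : ℝ → Set α) (m : ℝ) : Prop where
  measurableSet : ∀ s, MeasurableSet (F s)
  mono : Monotone F
  measure_eq : ∀ s ∈ Icc 0 m, μ (F s) = ENNReal.ofReal s

namespace IsNestedVolumeFamily

variable {α : Type*} [MeasurableSpace α] {μ : Measure α} {F : ℝ → Set α} {m : ℝ}
  {g : α → ℝ}

theorem measure_sdiff (hF : IsNestedVolumeFamily μ F m) {s t : ℝ} (hs : 0 ≤ s) (hst : s ≤ t)
    (ht : t ≤ m) : μ (F t \ F s) = ENNReal.ofReal (t - s) := by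
  have hFs := hF.measure_eq s ⟨hs, hst.trans ht⟩
  rw [MeasureTheory.measure_sdiff (hF.mono hst) (hF.measurableSet s).nullMeasurableSet
      (hFs ▸ ENNReal.ofReal_ne_top),
    hF.measure_eq t ⟨hs.trans hst, ht⟩, hFs, ENNReal.ofReal_sub _ hs]

theorem sum_abs_setIntegral_sub_lt (hF : IsNestedVolumeFamily μ F m)
    (hg : IntegrableOn g (F m) μ) :
    ∀ ε > (0 : ℝ), ∃ δ > (0 : ℝ), ∀ (n : ℕ) (a b : Fin n → ℝ),
      (∀ i, 0 ≤ a i ∧ a i ≤ b i ∧ b i ≤ m) →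
      Pairwise (fun i j => Disjoint (Ioc (a i) (b i)) (Ioc (a j) (b j))) →
      ∑ i, (b i - a i) < δ →
      ∑ i, |∫ x in F (b i), g x ∂μ - ∫ x in F (a i), g x ∂μ| < ε := by
  intro ε hε
  obtain ⟨δ, hδ, hsmall⟩ := hg.exists_pos_forall_setIntegral_abs_lt hε
  refine ⟨δ, hδ, fun n a b hab hdisj hsum => ?_⟩
  set D : Fin n → Set α := fun i => F (b i) \ F (a i)
  have hDsub : ∀ i, D i ⊆ F m := fun i => sdiff_subset.trans (hF.mono (hab i).2.2)
  have hDmeas : ∀ i, MeasurableSet (D i) := fun i =>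
    (hF.measurableSet _).diff (hF.measurableSet _)
  have hDdisj : Pairwise (Function.onFun Disjoint D) := fun i j hij =>
    disjoint_sdiff_of_disjoint_Ioc hF.mono (hab i).2.1 (hab j).2.1 (hdisj hij)
  have hDvol : μ (⋃ i, D i) < ENNReal.ofReal δ := calc
    μ (⋃ i, D i) ≤ ∑ i, μ (D i) := measure_iUnion_fintype_le _ _
    _ = ENNReal.ofReal (∑ i, (b i - a i)) := by
      rw [ENNReal.ofReal_sum_of_nonneg fun i _ => sub_nonneg.2 (hab i).2.1]
      exact Finset.sum_congr rfl fun i _ => hF.measure_sdiff (hab i).1 (hab i).2.1 (hab i).2.2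
    _ < ENNReal.ofReal δ := (ENNReal.ofReal_lt_ofReal_iff hδ).2 hsum
  calc ∑ i, |∫ x in F (b i), g x ∂μ - ∫ x in F (a i), g x ∂μ|
      = ∑ i, |∫ x in D i, g x ∂μ| := by
        refine Finset.sum_congr rfl fun i _ => ?_
        rw [setIntegral_sdiff (hF.measurableSet _) (hg.mono_set (hF.mono (hab i).2.2))
          (hF.mono (hab i).2.1)]
    _ ≤ ∑ i, ∫ x in D i, |g x| ∂μ := Finset.sum_le_sum fun i _ => abs_integral_le_integral_abs
    _ = ∫ x in ⋃ i, D i, |g x| ∂μ :=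
      (integral_iUnion_fintype hDmeas hDdisj fun i => (hg.mono_set (hDsub i)).abs).symm
    _ < ε := hsmall _ (iUnion_subset hDsub) hDvol

theorem absolutelyContinuousOnInterval_setIntegral (hF : IsNestedVolumeFamily μ F m)
    (hg : IntegrableOn g (F m) μ) (hm : 0 ≤ m) :
    AbsolutelyContinuousOnInterval (fun t => ∫ x in F t, g x ∂μ) 0 m :=
  absolutelyContinuousOnInterval_of_sum_abs_sub_lt hm (hF.sum_abs_setIntegral_sub_lt hg)

theorem ae_hasDerivAt_setIntegral (hF : IsNestedVolumeFamily μ F m)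
    (hg : IntegrableOn g (F m) μ) (hm : 0 ≤ m) :
    ∀ᵐ s ∂volume.restrict (Ioo 0 m),
      HasDerivAt (fun t => ∫ x in F t, g x ∂μ) (deriv (fun t => ∫ x in F t, g x ∂μ) s) s := by
  filter_upwards [ae_restrict_of_ae (hF.absolutelyContinuousOnInterval_setIntegral hg hm
      |>.ae_differentiableAt), ae_restrict_mem measurableSet_Ioo] with s hdiff hs
  exact (hdiff (uIcc_of_le hm ▸ Ioo_subset_Icc_self hs)).hasDerivAt

theorem integral_deriv_setIntegral (hF : IsNestedVolumeFamily μ F m)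
    (hg : IntegrableOn g (F m) μ) {t : ℝ} (ht : t ∈ Icc 0 m) :
    ∫ s in 0..t, deriv (fun t => ∫ x in F t, g x ∂μ) s = ∫ x in F t, g x ∂μ := by
  have hAC := hF.absolutelyContinuousOnInterval_setIntegral hg (ht.1.trans ht.2)
  have hF0 : μ (F 0) = 0 := by simpa using hF.measure_eq 0 ⟨le_rfl, ht.1.trans ht.2⟩
  rw [(hAC.mono (uIcc_subset_uIcc left_mem_uIcc (mem_uIcc_of_le ht.1 ht.2))).integral_deriv_eq_sub,
    setIntegral_measure_zero _ hF0, sub_zero]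

end IsNestedVolumeFamily

section Rearrangement

variable {α : Type*} [MeasurableSpace α] {μ : Measure α} {g : α → ℝ} {r s t : ℝ}

-- `sInf ∅ = 0`, so this vanishes for `s ≤ 0` and is antitone only on `Ioi 0`.
noncomputable def decreasingRearrangement (μ : Measure α) (g : α → ℝ) (s : ℝ) : ℝ :=
  sInf {t : ℝ | 0 ≤ t ∧ (μ {x | t < |g x|}).toReal < s}

theorem decreasingRearrangement_nonneg : 0 ≤ decreasingRearrangement μ g s :=
  Real.sInf_nonneg fun _ ht => ht.1

theorem decreasingRearrangement_le (hr : 0 ≤ r) (h : (μ {x | r < |g x|}).toReal < s) :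
    decreasingRearrangement μ g s ≤ r :=
  csInf_le ⟨0, fun _ ht => ht.1⟩ ⟨hr, h⟩

variable [IsFiniteMeasure μ]

theorem nonempty_setOf_measure_lt_abs_lt (hg : AEMeasurable g μ) (hs : 0 < s) :
    {t : ℝ | 0 ≤ t ∧ (μ {x | t < |g x|}).toReal < s}.Nonempty := by
  have hlim : Tendsto (fun n : ℕ => μ {x | (n : ℝ) < |g x|}) atTop (nhds 0) := by
    have := tendsto_measure_iInter_atTop (μ := μ) (s := fun n : ℕ => {x | (n : ℝ) < |g x|})
      (fun n => nullMeasurableSet_lt aemeasurable_const hg.abs)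
      (fun n k hnk _ hx => (Nat.cast_le (α := ℝ) |>.2 hnk).trans_lt hx) ⟨0, measure_ne_top _ _⟩
    have hempty : (⋂ n : ℕ, {x | (n : ℝ) < |g x|}) = ∅ :=
      iInter_eq_empty_iff.2 fun x => (exists_nat_ge |g x|).imp fun _ hn => hn.not_gt
    rwa [hempty, measure_empty] at this
  obtain ⟨n, hn⟩ := (hlim.eventually_lt_const (ENNReal.ofReal_pos.2 hs)).exists
  exact ⟨n, n.cast_nonneg, ENNReal.toReal_lt_of_lt_ofReal hn⟩

theorem antitoneOn_decreasingRearrangement (hg : AEMeasurable g μ) :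
    AntitoneOn (decreasingRearrangement μ g) (Ioi 0) := fun _ hs₁ _ _ hs =>
  csInf_le_csInf ⟨0, fun _ ht => ht.1⟩ (nonempty_setOf_measure_lt_abs_lt hg hs₁)
    fun _ ht => ⟨ht.1, ht.2.trans_le hs⟩

theorem exists_gt_measure_lt_abs_gt (h : s < (μ {x | r < |g x|}).toReal) :
    ∃ r' > r, s < (μ {x | r' < |g x|}).toReal := by
  have hU : {x | r < |g x|} = ⋃ n : ℕ, {x | r + 1 / ((n : ℝ) + 1) < |g x|} := by
    ext x
    simp only [mem_ofPred_eq, mem_iUnion]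
    refine ⟨fun hx => ?_, fun ⟨n, hn⟩ =>
      (lt_add_of_pos_right r Nat.one_div_pos_of_nat).trans hn⟩
    obtain ⟨n, hn⟩ := exists_nat_one_div_lt (sub_pos.2 hx)
    exact ⟨n, by linarith⟩
  have hlim := tendsto_measure_iUnion_atTop (μ := μ)
    (s := fun n : ℕ => {x | r + 1 / ((n : ℝ) + 1) < |g x|})
    fun n k hnk x (hx : r + 1 / ((n : ℝ) + 1) < |g x|) =>
      show r + 1 / ((k : ℝ) + 1) < |g x| by grw [Nat.one_div_le_one_div hnk]; exact hx
  rw [← hU] at hlim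
  obtain ⟨n, hn⟩ :=
    (((ENNReal.tendsto_toReal (measure_ne_top _ _)).comp hlim).eventually_const_lt h).exists
  exact ⟨_, lt_add_of_pos_right r Nat.one_div_pos_of_nat, hn⟩

theorem lt_decreasingRearrangement (hg : AEMeasurable g μ) (hs : 0 < s)
    (h : s < (μ {x | r < |g x|}).toReal) : r < decreasingRearrangement μ g s := by
  obtain ⟨r', hrr', hr'⟩ := exists_gt_measure_lt_abs_gt h
  refine hrr'.trans_le (le_csInf (nonempty_setOf_measure_lt_abs_lt hg hs) fun u hu => ?_)
  by_contra! hur'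
  have hmono : μ {x | r' < |g x|} ≤ μ {x | u < |g x|} :=
    measure_mono fun x (hx : r' < |g x|) => show u < |g x| from hur'.trans hx
  linarith [hu.2, ENNReal.toReal_mono (measure_ne_top _ _) hmono]

theorem volume_lt_decreasingRearrangement_inter_Ioo (hg : AEMeasurable g μ) (hr : 0 ≤ r) :
    volume ({s | r < decreasingRearrangement μ g s} ∩ Ioo 0 t) =
      min (ENNReal.ofReal t) (μ {x | r < |g x|}) := by
  set c := min t (μ {x | r < |g x|}).toReal
  have hc : ENNReal.ofReal c = min (ENNReal.ofReal t) (μ {x | r < |g x|}) := by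
    rw [ENNReal.ofReal_min, ENNReal.ofReal_toReal (measure_ne_top _ _)]
  refine le_antisymm ?_ ?_
  · calc volume ({s | r < decreasingRearrangement μ g s} ∩ Ioo 0 t)
        ≤ volume (Ioc 0 c) := measure_mono fun s ⟨hrs, hs⟩ => ⟨hs.1, le_min hs.2.le (by
          by_contra! hlt
          exact (decreasingRearrangement_le hr hlt).not_gt hrs)⟩
      _ = _ := by rw [Real.volume_Ioc, sub_zero, hc]
  · calc min (ENNReal.ofReal t) (μ {x | r < |g x|})
        = volume (Ioo 0 c) := by rw [Real.volume_Ioo, sub_zero, hc]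
      _ ≤ _ := measure_mono fun s ⟨hs0, hsc⟩ => by
        exact ⟨lt_decreasingRearrangement hg hs0 (lt_min_iff.1 hsc).2, hs0, (lt_min_iff.1 hsc).1⟩

theorem lintegral_decreasingRearrangement (hg : AEMeasurable g μ) (t : ℝ) :
    ∫⁻ s in Ioo 0 t, ENNReal.ofReal (decreasingRearrangement μ g s) =
      ∫⁻ r in Ioi 0, min (ENNReal.ofReal t) (μ {x | r < |g x|}) := by
  rw [lintegral_eq_lintegral_meas_lt _ (ae_of_all _ fun _ => decreasingRearrangement_nonneg)
    (aemeasurable_restrict_of_antitoneOn measurableSet_Ioo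
      ((antitoneOn_decreasingRearrangement hg).mono Ioo_subset_Ioi_self))]
  refine setLIntegral_congr_fun measurableSet_Ioi fun r hr => ?_
  rw [Measure.restrict_apply' measurableSet_Ioo,
    volume_lt_decreasingRearrangement_inter_Ioo hg (le_of_lt hr)]

theorem lintegral_abs_le_lintegral_decreasingRearrangement (hg : AEMeasurable g μ) (E : Set α) :
    ∫⁻ x in E, ENNReal.ofReal |g x| ∂μ ≤
      ∫⁻ s in Ioo 0 (μ E).toReal, ENNReal.ofReal (decreasingRearrangement μ g s) := by
  rw [lintegral_decreasingRearrangement hg, ENNReal.ofReal_toReal (measure_ne_top _ _),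
    lintegral_eq_lintegral_meas_lt _ (ae_of_all _ fun _ => abs_nonneg _) hg.abs.restrict]
  exact lintegral_mono fun r => le_min
    ((measure_mono (subset_univ _)).trans_eq (Measure.restrict_apply_univ E))
    (Measure.restrict_apply_le _ _)

theorem setIntegral_abs_le_integral_decreasingRearrangement (hg : Integrable g μ) (E : Set α) :
    ∫ x in E, |g x| ∂μ ≤ ∫ s in 0..(μ E).toReal, decreasingRearrangement μ g s := by
  have hanti := (antitoneOn_decreasingRearrangement hg.aemeasurable).mono
    (fun _ hs => hs.1 : Ioo 0 (μ E).toReal ⊆ Ioi 0)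
  have hfin : ∫⁻ s in Ioo 0 (μ E).toReal, ENNReal.ofReal (decreasingRearrangement μ g s) ≠ ⊤ := by
    refine ne_top_of_le_ne_top hg.abs.lintegral_lt_top.ne ?_
    rw [lintegral_decreasingRearrangement hg.aemeasurable,
      lintegral_eq_lintegral_meas_lt _ (ae_of_all _ fun _ => abs_nonneg _) hg.aemeasurable.abs]
    exact lintegral_mono fun r => min_le_right _ _
  rw [intervalIntegral.integral_of_le ENNReal.toReal_nonneg, integral_Ioc_eq_integral_Ioo,
    integral_eq_lintegral_of_nonneg_ae (ae_of_all _ fun _ => abs_nonneg _)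
      hg.restrict.abs.aestronglyMeasurable,
    integral_eq_lintegral_of_nonneg_ae (ae_of_all _ fun _ => decreasingRearrangement_nonneg)
      (aemeasurable_restrict_of_antitoneOn measurableSet_Ioo hanti).aestronglyMeasurable]
  exact ENNReal.toReal_mono hfin
    (lintegral_abs_le_lintegral_decreasingRearrangement hg.aemeasurable E)

end Rearrangement

theorem rearr_eq_decreasingRearrangement {N : ℕ} {Ω : Set (EuclideanSpace ℝ (Fin N))}
    (hΩ : MeasurableSet Ω) (g : EuclideanSpace ℝ (Fin N) → ℝ) :
    rearr Ω g = decreasingRearrangement (volume.restrict Ω) g := by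
  ext s
  simp only [rearr, decreasingRearrangement, Measure.restrict_apply' hΩ, inter_comm _ Ω]
  rfl

theorem setIntegral_abs_le_integral_rearr {N : ℕ} {Ω : Set (EuclideanSpace ℝ (Fin N))}
    (hΩm : MeasurableSet Ω) (hΩfin : volume Ω ≠ ⊤) {g : EuclideanSpace ℝ (Fin N) → ℝ}
    (hg : IntegrableOn g Ω) {E : Set (EuclideanSpace ℝ (Fin N))} (hE : E ⊆ Ω) :
    ∫ x in E, |g x| ≤ ∫ s in 0..(volume E).toReal, rearr Ω g s := by
  have : IsFiniteMeasure (volume.restrict Ω) := isFiniteMeasure_restrict.2 hΩfin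
  have hHL := setIntegral_abs_le_integral_decreasingRearrangement hg E
  rwa [Measure.restrict_restrict_of_subset hE, Measure.restrict_eq_self _ hE,
    ← rearr_eq_decreasingRearrangement hΩm] at hHL

theorem stmt_5_general {N : ℕ} (Ω : Set (EuclideanSpace ℝ (Fin N)))
    (hΩm : MeasurableSet Ω) (hΩb : Bornology.IsBounded Ω)
    (g : EuclideanSpace ℝ (Fin N) → ℝ) (hg : 0 ≤ g)
    (hgint : IntegrableOn g Ω)
    (F : ℝ → Set (EuclideanSpace ℝ (Fin N)))
    (hFmeas : ∀ s, MeasurableSet (F s))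
    (hFsub : ∀ s, F s ⊆ Ω)
    (hFvol : ∀ s ∈ Icc (0 : ℝ) (volume Ω).toReal, (volume (F s)).toReal = s)
    (hFmono : ∀ s₁ s₂, s₁ < s₂ → F s₁ ⊆ F s₂) :
    -- the primitive is absolutely continuous on (0,|Ω|)
    (∀ ε > (0 : ℝ), ∃ δ > (0 : ℝ), ∀ (n : ℕ) (a b : Fin n → ℝ),
      (∀ i, 0 < a i ∧ a i ≤ b i ∧ b i < (volume Ω).toReal) →
      (Pairwise fun i j => Disjoint (Ioc (a i) (b i)) (Ioc (a j) (b j))) →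
      (∑ i, (b i - a i)) < δ →
      (∑ i, |(∫ x in F (b i), g x) - ∫ x in F (a i), g x|) < ε) ∧
    -- its a.e. derivative D satisfies the FTC identity and the bound
    ∃ D : ℝ → ℝ,
      (∀ᵐ s ∂(volume.restrict (Ioo (0 : ℝ) (volume Ω).toReal)),
        HasDerivAt (fun t => ∫ x in F t, g x) (D s) s) ∧
      ∀ t ∈ Ioo (0 : ℝ) (volume Ω).toReal,
        (∫ s in (0 : ℝ)..t, D s) = (∫ x in F t, g x) ∧
        (∫ x in F t, g x) ≤ ∫ s in (0 : ℝ)..t, rearr Ω g s := by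
  have hΩfin : volume Ω ≠ ⊤ := hΩb.measure_lt_top.ne
  have hF : IsNestedVolumeFamily volume F (volume Ω).toReal :=
    { measurableSet := hFmeas
      mono := monotone_iff_forall_lt.2 hFmono
      measure_eq := fun s hs => by
        rw [← ENNReal.ofReal_toReal (measure_ne_top_of_subset (hFsub s) hΩfin), hFvol s hs] }
  have hgF : IntegrableOn g (F (volume Ω).toReal) := hgint.mono_set (hFsub _)
  refine ⟨fun ε hε => ?_, _, hF.ae_hasDerivAt_setIntegral hgF ENNReal.toReal_nonneg,
    fun t ht => ⟨hF.integral_deriv_setIntegral hgF (Ioo_subset_Icc_self ht), ?_⟩⟩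
  · obtain ⟨δ, hδ, hsum⟩ := hF.sum_abs_setIntegral_sub_lt hgF ε hε
    exact ⟨δ, hδ, fun n a b hab => hsum n a b fun i => ⟨(hab i).1.le, (hab i).2.1, (hab i).2.2.le⟩⟩
  · calc ∫ x in F t, g x = ∫ x in F t, |g x| :=
          setIntegral_congr_fun (hFmeas t) fun x _ => (abs_of_nonneg (hg x)).symm
      _ ≤ ∫ s in 0..(volume (F t)).toReal, rearr Ω g s :=
          setIntegral_abs_le_integral_rearr hΩm hΩfin hgint (hFsub t)
      _ = ∫ s in 0..t, rearr Ω g s := by rw [hFvol t (Ioo_subset_Icc_self ht)]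

/-- Absolute continuity and fundamental theorem of calculus for the
pseudo-rearrangement primitive `s ↦ ∫_{Ω(s)} g`. -/
theorem stmt_5 {N : ℕ} (Ω : Set (EuclideanSpace ℝ (Fin N)))
    (hΩm : MeasurableSet Ω) (hΩb : Bornology.IsBounded Ω)
    (v : EuclideanSpace ℝ (Fin N) → ℝ) (hv : Measurable v)
    (g : EuclideanSpace ℝ (Fin N) → ℝ) (hg : 0 ≤ g)
    (hgint : IntegrableOn g Ω)
    (F : ℝ → Set (EuclideanSpace ℝ (Fin N)))
    (hFmeas : ∀ s, MeasurableSet (F s))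
    (hFsub : ∀ s, F s ⊆ Ω)
    (hFvol : ∀ s ∈ Icc (0 : ℝ) (volume Ω).toReal, (volume (F s)).toReal = s)
    (hFmono : ∀ s₁ s₂, s₁ < s₂ → F s₁ ⊆ F s₂)
    (hFadapted : ∀ s ∈ Icc (0 : ℝ) (volume Ω).toReal,
      {x ∈ Ω | |v x| > rearr Ω v s} ⊆ F s ∧
        F s ⊆ {x ∈ Ω | |v x| ≥ rearr Ω v s}) :
    -- the primitive is absolutely continuous on (0,|Ω|)
    (∀ ε > (0 : ℝ), ∃ δ > (0 : ℝ), ∀ (n : ℕ) (a b : Fin n → ℝ),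
      (∀ i, 0 < a i ∧ a i ≤ b i ∧ b i < (volume Ω).toReal) →
      (Pairwise fun i j => Disjoint (Ioc (a i) (b i)) (Ioc (a j) (b j))) →
      (∑ i, (b i - a i)) < δ →
      (∑ i, |(∫ x in F (b i), g x) - ∫ x in F (a i), g x|) < ε) ∧
    -- its a.e. derivative D satisfies the FTC identity and the bound
    ∃ D : ℝ → ℝ,
      (∀ᵐ s ∂(volume.restrict (Ioo (0 : ℝ) (volume Ω).toReal)),
        HasDerivAt (fun t => ∫ x in F t, g x) (D s) s) ∧
      ∀ t ∈ Ioo (0 : ℝ) (volume Ω).toReal,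
        (∫ s in (0 : ℝ)..t, D s) = (∫ x in F t, g x) ∧
        (∫ x in F t, g x) ≤ ∫ s in (0 : ℝ)..t, rearr Ω g s :=
  stmt_5_general Ω hΩm hΩb g hg hgint F hFmeas hFsub hFvol hFmono
end

section
/- With the notation of the pseudo-rearrangement lemma, for almost every k > 0 one has D(A(k))·(−A'(k)) = −(d/dk) ∫_{{|v| > k}} g(x) dx, where A is the distribution function of v. -/
/-!
Write `H t = ∫_{|v| > t} g` and `G s = ∫_{Ω(s)} g`. Since `Ω(A k)` and `{|v| > k}` are nested and
have the same measure, `H = G ∘ A` everywhere. Both `A` and `H` are tails of finite measures on `ℝ`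
(the laws of `|v|` under `dx|_Ω` and under `g dx|_Ω`), the second absolutely continuous with
respect to the first, so both are a.e. differentiable with derivatives minus the Radon–Nikodym
densities, and `H' = 0` a.e. where `A' = 0`. An antitone `A` is injective on `{A' ≠ 0}`, so by the
area formula a.e. `k` with `A' k ≠ 0` is sent outside the null set where `G` lacks the derivative
`D`; there the chain rule gives `H' k = D (A k) * A' k`.
-/

open MeasureTheory Set
open scoped ENNReal

namespace MeasureTheory.Measure

noncomputable def cdfStieltjes (μ : Measure ℝ) [IsFiniteMeasure μ] : StieltjesFunction ℝ where
  toFun x := μ.real (Iic x)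
  mono' _ _ h := measureReal_mono (Iic_subset_Iic.2 h)
  right_continuous' a := by
    have hIic : ⋂ r > a, Iic r = Iic a := by
      ext x
      simp only [mem_iInter, mem_Iic]
      exact ⟨fun h => le_of_forall_gt_imp_ge_of_dense h, fun h r hr => h.trans hr.le⟩
    have h := tendsto_measure_biInter_gt (μ := μ) (s := Iic) (a := a)
      (fun _ _ => measurableSet_Iic.nullMeasurableSet) (fun _ _ _ h => Iic_subset_Iic.2 h)
      ⟨a + 1, by simp, measure_ne_top _ _⟩
    rw [hIic] at h
    rw [← continuousWithinAt_Ioi_iff_Ici]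
    exact (ENNReal.tendsto_toReal (measure_ne_top _ _)).comp h

lemma cdfStieltjes_apply (μ : Measure ℝ) [IsFiniteMeasure μ] (x : ℝ) :
    cdfStieltjes μ x = μ.real (Iic x) := rfl

lemma measure_cdfStieltjes (μ : Measure ℝ) [IsFiniteMeasure μ] :
    (cdfStieltjes μ).measure = μ := by
  refine ext_of_Ioc _ _ fun a b hab => ?_
  rw [StieltjesFunction.measure_Ioc, cdfStieltjes_apply, cdfStieltjes_apply,
    ← measureReal_sdiff (Iic_subset_Iic.2 hab.le) measurableSet_Iic, sdiff_eq, compl_Iic,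
    inter_comm, Ioi_inter_Iic, ofReal_measureReal]

lemma ae_hasDerivAt_measureReal_Ioi (μ : Measure ℝ) [IsFiniteMeasure μ] :
    ∀ᵐ x, HasDerivAt (fun t => μ.real (Ioi t)) (-(μ.rnDeriv volume x).toReal) x := by
  filter_upwards [(cdfStieltjes μ).ae_hasDerivAt] with x hx
  rw [measure_cdfStieltjes] at hx
  refine (hx.const_sub (μ.real univ)).congr_of_eventuallyEq (.of_forall fun t => ?_)
  dsimp only
  rw [cdfStieltjes_apply, ← compl_Iic, measureReal_compl measurableSet_Iic]

lemma ae_rnDeriv_eq_zero_of_absolutelyContinuous {α : Type*} [MeasurableSpace α]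
    {σ ρ ν : Measure α} [SigmaFinite σ] [SigmaFinite ρ] [SigmaFinite ν] (h : σ ≪ ρ) :
    ∀ᵐ x ∂ν, ρ.rnDeriv ν x = 0 → σ.rnDeriv ν x = 0 := by
  filter_upwards [rnDeriv_mul_rnDeriv (κ := ν) h] with x hx hρ
  rw [← hx, Pi.mul_apply, hρ, mul_zero]

lemma AbsolutelyContinuous.ae_deriv_measureReal_Ioi_eq_zero {σ ρ : Measure ℝ}
    [IsFiniteMeasure σ] [IsFiniteMeasure ρ] (h : σ ≪ ρ) :
    ∀ᵐ x, deriv (fun t => ρ.real (Ioi t)) x = 0 →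
      deriv (fun t => σ.real (Ioi t)) x = 0 := by
  filter_upwards [ae_hasDerivAt_measureReal_Ioi ρ, ae_hasDerivAt_measureReal_Ioi σ,
    ae_rnDeriv_eq_zero_of_absolutelyContinuous h, rnDeriv_lt_top ρ volume]
    with x hρ hσ hσρ hfin hzero
  rw [hρ.deriv, neg_eq_zero, ENNReal.toReal_eq_zero_iff] at hzero
  rw [hσ.deriv, hσρ (hzero.resolve_right hfin.ne), ENNReal.toReal_zero, neg_zero]

end MeasureTheory.Measure

lemma deriv_eq_zero_of_eqOn_Icc {f : ℝ → ℝ} {a b c : ℝ} (hab : a < b)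
    (hf : EqOn f (fun _ => c) (Icc a b)) {x : ℝ} (hx : x ∈ Icc a b) : deriv f x = 0 := by
  by_cases hd : DifferentiableAt ℝ f x
  · have hconst : HasDerivWithinAt f 0 (Icc a b) x :=
      (hasDerivWithinAt_const x _ c).congr hf (hf hx)
    have hu := uniqueDiffOn_Icc hab x hx
    rw [← hd.derivWithin hu, hconst.derivWithin hu]
  · exact deriv_zero_of_not_differentiableAt hd

lemma Antitone.injOn_setOf_deriv_ne_zero {f : ℝ → ℝ} (hf : Antitone f) :
    InjOn f {x | deriv f x ≠ 0} := by
  suffices ∀ x y, x < y → f x = f y → deriv f x = 0 by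
    intro x hx y hy hxy
    by_contra hne
    rcases lt_or_gt_of_ne hne with h | h
    · exact hx (this x y h hxy)
    · exact hy (this y x h hxy.symm)
  intro x y hxy hfxy
  refine deriv_eq_zero_of_eqOn_Icc hxy (c := f x) (fun z hz => ?_) (left_mem_Icc.2 hxy.le)
  exact le_antisymm (hf hz.1) (hfxy ▸ hf hz.2)

lemma ae_imp_comp_of_injOn_deriv_ne_zero {f : ℝ → ℝ} (hf : Measurable f)
    (hinj : InjOn f {x | deriv f x ≠ 0}) {p : ℝ → Prop} (hp : ∀ᵐ y, p y) :
    ∀ᵐ x, deriv f x ≠ 0 → p (f x) := by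
  set E := toMeasurable volume {y | ¬p y}
  set K := {x | deriv f x ≠ 0} ∩ f ⁻¹' E
  have hK : MeasurableSet K :=
    (measurable_deriv f (measurableSet_singleton 0).compl).inter
      (hf (measurableSet_toMeasurable _ _))
  have hfK : ∀ x ∈ K, HasFDerivWithinAt f ((1 : ℝ →L[ℝ] ℝ).smulRight (deriv f x)) K x :=
    fun x hx =>
      (differentiableAt_of_deriv_ne_zero hx.1).hasDerivAt.hasDerivWithinAt.hasFDerivWithinAt
  have himage : ∫⁻ x in K, ENNReal.ofReal |deriv f x| = 0 := by
    have h := lintegral_abs_det_fderiv_eq_addHaar_image volume hK hfK (hinj.mono inter_subset_left)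
    simp only [ContinuousLinearMap.smulRight_one_eq_toSpanSingleton,
      ContinuousLinearMap.det_toSpanSingleton] at h
    rw [h]
    refine measure_mono_null (image_subset_iff.2 inter_subset_right) ?_
    rw [measure_toMeasurable]
    exact ae_iff.1 hp
  have hK0 : volume K = 0 := by
    rw [setLIntegral_eq_zero_iff hK (measurable_deriv f).abs.ennreal_ofReal] at himage
    refine measure_eq_zero_iff_ae_notMem.2 ?_
    filter_upwards [himage] with x hx hxK
    exact hxK.1 (by simpa using hx hxK)
  filter_upwards [measure_eq_zero_iff_ae_notMem.1 hK0] with x hx hdx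
  by_contra hpx
  exact hx ⟨hdx, subset_toMeasurable _ _ hpx⟩

lemma setIntegral_sep_gt_eq_of_measure_eq {α : Type*} [MeasurableSpace α] {μ : Measure α}
    {Ω F : Set α} {u : α → ℝ} {c k : ℝ} (f : α → ℝ)
    (hS : NullMeasurableSet {x ∈ Ω | u x > k} μ) (hF : NullMeasurableSet F μ)
    (hvol : μ F = μ {x ∈ Ω | u x > k}) (hfin : μ F ≠ ∞)
    (hadapted : {x ∈ Ω | u x > c} ⊆ F ∧ F ⊆ {x ∈ Ω | u x ≥ c}) :
    ∫ x in {x ∈ Ω | u x > k}, f x ∂μ = ∫ x in F, f x ∂μ := by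
  apply setIntegral_congr_set
  rcases le_or_gt c k with hck | hkc
  · have hsub : {x ∈ Ω | u x > k} ⊆ F := fun x hx => hadapted.1 ⟨hx.1, hck.trans_lt hx.2⟩
    exact ae_eq_of_subset_of_measure_ge hsub hvol.le hS hfin
  · have hsub : F ⊆ {x ∈ Ω | u x > k} := fun x hx =>
      ⟨(hadapted.2 hx).1, hkc.trans_le (hadapted.2 hx).2⟩
    exact (ae_eq_of_subset_of_measure_ge hsub hvol.ge hF (hvol ▸ hfin)).symm

section DistributionMeasure

variable {α : Type*} [MeasurableSpace α] {μ : Measure α} {Ω : Set α} {u : α → ℝ}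

lemma measureReal_map_restrict_Ioi (hu : Measurable u) (t : ℝ) :
    ((μ.restrict Ω).map u).real (Ioi t) = μ.real {x ∈ Ω | u x > t} := by
  rw [measureReal_def, Measure.map_apply hu measurableSet_Ioi,
    Measure.restrict_apply (hu measurableSet_Ioi), inter_comm]
  rfl

lemma measureReal_map_withDensity_Ioi (hu : Measurable u) {f : α → ℝ} (hf : 0 ≤ f)
    (hfi : IntegrableOn f Ω μ) (t : ℝ) :
    (((μ.restrict Ω).withDensity fun x => ENNReal.ofReal (f x)).map u).real (Ioi t) =
      ∫ x in {x ∈ Ω | u x > t}, f x ∂μ := by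
  rw [measureReal_def, Measure.map_apply hu measurableSet_Ioi,
    withDensity_apply _ (hu measurableSet_Ioi), Measure.restrict_restrict (hu measurableSet_Ioi),
    inter_comm, ← ofReal_integral_eq_lintegral_ofReal (hfi.mono_set inter_subset_left)
      (.of_forall hf), ENNReal.toReal_ofReal (setIntegral_nonneg_of_ae (.of_forall hf))]
  rfl

lemma ae_deriv_setIntegral_sep_gt_eq_zero (hΩ : μ Ω ≠ ∞) (hu : Measurable u) {f : α → ℝ}
    (hf : 0 ≤ f) (hfi : IntegrableOn f Ω μ) :
    ∀ᵐ k, deriv (fun t => μ.real {x ∈ Ω | u x > t}) k = 0 →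
      deriv (fun t => ∫ x in {x ∈ Ω | u x > t}, f x ∂μ) k = 0 := by
  have : IsFiniteMeasure (μ.restrict Ω) := isFiniteMeasure_restrict.2 hΩ
  have := isFiniteMeasure_withDensity_ofReal hfi.2
  have hσρ : ((μ.restrict Ω).withDensity fun x => ENNReal.ofReal (f x)).map u ≪
      (μ.restrict Ω).map u := (withDensity_absolutelyContinuous _ _).map hu
  simpa only [measureReal_map_restrict_Ioi hu, measureReal_map_withDensity_Ioi hu hf hfi]
    using hσρ.ae_deriv_measureReal_Ioi_eq_zero

end DistributionMeasure

theorem stmt_6_general {N : ℕ} (Ω : Set (EuclideanSpace ℝ (Fin N)))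
    (hΩm : MeasurableSet Ω) (hΩb : Bornology.IsBounded Ω)
    (v : EuclideanSpace ℝ (Fin N) → ℝ) (hv : Measurable v)
    (A : ℝ → ℝ) (hA : ∀ k, A k = (volume {x ∈ Ω | |v x| > k}).toReal)
    (g : EuclideanSpace ℝ (Fin N) → ℝ) (hg : 0 ≤ g)
    (hgint : IntegrableOn g Ω)
    (vbar : ℝ → ℝ)
    (F : ℝ → Set (EuclideanSpace ℝ (Fin N)))
    (hFmeas : ∀ s, MeasurableSet (F s))
    (hFsub : ∀ s, F s ⊆ Ω)
    (hFvol : ∀ s ∈ Icc (0 : ℝ) (volume Ω).toReal, (volume (F s)).toReal = s)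
    (hFadapted : ∀ s ∈ Icc (0 : ℝ) (volume Ω).toReal,
      {x ∈ Ω | |v x| > vbar s} ⊆ F s ∧ F s ⊆ {x ∈ Ω | |v x| ≥ vbar s})
    (D : ℝ → ℝ)
    (hD : ∀ᵐ s ∂(volume.restrict (Ioo (0 : ℝ) (volume Ω).toReal)),
      HasDerivAt (fun t => ∫ x in F t, g x) (D s) s) :
    ∀ᵐ k ∂(volume.restrict (Ioi (0 : ℝ))),
      D (A k) * (-(deriv A k))
        = -(deriv (fun t => ∫ x in {x ∈ Ω | |v x| > t}, g x) k) := by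
  have hΩ : volume Ω ≠ ∞ := hΩb.measure_lt_top.ne
  have hA' : A = fun t => volume.real {x ∈ Ω | |v x| > t} := funext hA
  have hAnti : Antitone A := hA' ▸ fun a b hab =>
    measureReal_mono (fun x hx => ⟨hx.1, hab.trans_lt hx.2⟩)
      (measure_ne_top_of_subset (sep_subset _ _) hΩ)
  have hAmem : ∀ k, A k ∈ Icc 0 (volume Ω).toReal := fun k =>
    ⟨hA k ▸ ENNReal.toReal_nonneg, hA k ▸ measureReal_mono (sep_subset _ _) hΩ⟩
  have hcomp :
      (fun t => ∫ x in {x ∈ Ω | |v x| > t}, g x) = (fun s => ∫ x in F s, g x) ∘ A := by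
    funext k
    have hS : MeasurableSet {x ∈ Ω | |v x| > k} := hΩm.inter (hv.abs measurableSet_Ioi)
    refine setIntegral_sep_gt_eq_of_measure_eq g hS.nullMeasurableSet
      (hFmeas _).nullMeasurableSet ?_ (measure_ne_top_of_subset (hFsub _) hΩ)
      (hFadapted _ (hAmem k))
    rw [← ENNReal.toReal_eq_toReal_iff' (measure_ne_top_of_subset (hFsub _) hΩ)
      (measure_ne_top_of_subset (sep_subset _ _) hΩ), hFvol _ (hAmem k), hA]
  have hG : ∀ᵐ s, s ∈ Icc 0 (volume Ω).toReal →
      HasDerivAt (fun t => ∫ x in F t, g x) (D s) s := by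
    rwa [← ae_restrict_iff' measurableSet_Icc, ← Measure.restrict_congr_set Ioo_ae_eq_Icc]
  refine ae_restrict_of_ae ?_
  filter_upwards [ae_imp_comp_of_injOn_deriv_ne_zero hAnti.measurable
      hAnti.injOn_setOf_deriv_ne_zero hG, ae_deriv_setIntegral_sep_gt_eq_zero hΩ hv.abs hg hgint]
    with k hGk hAH
  rw [← hA'] at hAH
  by_cases h0 : deriv A k = 0
  · rw [h0, hAH h0, neg_zero, mul_zero]
  · have hAk := (differentiableAt_of_deriv_ne_zero h0).hasDerivAt
    rw [hcomp, ((hGk h0 (hAmem k)).comp k hAk).deriv]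
    ring

/-- Chain rule identity for the pseudo-rearrangement: for a.e. `k > 0`,
`D(A(k))·(−A'(k)) = −(d/dk) ∫_{{|v|>k}} g`. -/
theorem stmt_6 {N : ℕ} (Ω : Set (EuclideanSpace ℝ (Fin N)))
    (hΩm : MeasurableSet Ω) (hΩb : Bornology.IsBounded Ω)
    (v : EuclideanSpace ℝ (Fin N) → ℝ) (hv : Measurable v)
    (A : ℝ → ℝ) (hA : ∀ k, A k = (volume {x ∈ Ω | |v x| > k}).toReal)
    (g : EuclideanSpace ℝ (Fin N) → ℝ) (hg : 0 ≤ g)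
    (hgint : IntegrableOn g Ω)
    (vbar : ℝ → ℝ) (hvbar : ∀ s, vbar s = sInf {t : ℝ | 0 ≤ t ∧ A t < s})
    (F : ℝ → Set (EuclideanSpace ℝ (Fin N)))
    (hFmeas : ∀ s, MeasurableSet (F s))
    (hFsub : ∀ s, F s ⊆ Ω)
    (hFvol : ∀ s ∈ Icc (0 : ℝ) (volume Ω).toReal, (volume (F s)).toReal = s)
    (hFmono : ∀ s₁ s₂, s₁ < s₂ → F s₁ ⊆ F s₂)
    (hFadapted : ∀ s ∈ Icc (0 : ℝ) (volume Ω).toReal,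
      {x ∈ Ω | |v x| > vbar s} ⊆ F s ∧ F s ⊆ {x ∈ Ω | |v x| ≥ vbar s})
    (D : ℝ → ℝ)
    (hD : ∀ᵐ s ∂(volume.restrict (Ioo (0 : ℝ) (volume Ω).toReal)),
      HasDerivAt (fun t => ∫ x in F t, g x) (D s) s) :
    ∀ᵐ k ∂(volume.restrict (Ioi (0 : ℝ))),
      D (A k) * (-(deriv A k))
        = -(deriv (fun t => ∫ x in {x ∈ Ω | |v x| > t}, g x) k) :=
  stmt_6_general Ω hΩm hΩb v hv A hA g hg hgint vbar F hFmeas hFsub hFvol hFadapted D hD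
end

section
/- If g ∈ Lʳ(Ω) with 1 ≤ r ≤ ∞, then the pseudo-rearrangement D of g with respect to a measurable function v belongs to Lʳ(0,|Ω|) and ‖D‖_{Lʳ(0,|Ω|)} ≤ ‖g‖_{Lʳ(Ω)}. -/
open MeasureTheory Set ENNReal Filter Topology

/-! For `0 ≤ s < y ≤ |Ω|` the difference quotient of `φ t = ∫_{Ω(t)} |g|` between `s` and `y`
is the mean of `|g|` over the shell `Ω(y) \ Ω(s)`, a set of measure `y - s`. For `r = ∞` this mean
is at most `‖g‖_∞`. For `r < ∞`, Jensen's inequality bounds its `r`-th power by the mean of `|g|^r`,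
which is the difference quotient of `ψ t = ∫_{Ω(t)} |g|^r`; letting `y ↓ s` gives `D^r ≤ ψ'` a.e.,
and the derivative of the monotone function `ψ` integrates to at most
`ψ |Ω| - ψ 0 ≤ ∫_Ω |g|^r`. -/

theorem aestronglyMeasurable_of_ae_hasDerivAt {μ : Measure ℝ} {f D : ℝ → ℝ}
    (h : ∀ᵐ s ∂μ, HasDerivAt f (D s) s) : AEStronglyMeasurable D μ :=
  (measurable_deriv f).aestronglyMeasurable.congr (h.mono fun _ hs => hs.deriv)

theorem MonotoneOn.lintegral_le_of_ae_le_deriv {ψ : ℝ → ℝ} {a b : ℝ} {u : ℝ → ℝ≥0∞}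
    (hψ : MonotoneOn ψ (Icc a b))
    (hu : ∀ᵐ s ∂volume.restrict (Ioo a b), u s ≤ ENNReal.ofReal (deriv ψ s)) :
    ∫⁻ s in Ioo a b, u s ≤ ENNReal.ofReal (ψ b - ψ a) := by
  rcases lt_or_ge b a with hba | hab
  · simp [Ioo_eq_empty_of_le hba.le]
  rw [← uIcc_of_le hab] at hψ
  have hint : IntegrableOn (deriv ψ) (Ioo a b) :=
    hψ.intervalIntegrable_deriv.1.mono_set Ioo_subset_Ioc_self
  have hnonneg : 0 ≤ᵐ[volume.restrict (Ioo a b)] deriv ψ := by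
    filter_upwards [ae_restrict_mem measurableSet_Ioo] with x hx
    rw [← derivWithin_of_mem_nhds (Icc_mem_nhds hx.1 hx.2), ← uIcc_of_le hab]
    exact hψ.derivWithin_nonneg
  have hψab : ψ a ≤ ψ b := hψ (by simp) (by simp) hab
  calc ∫⁻ s in Ioo a b, u s ≤ ∫⁻ s in Ioo a b, ENNReal.ofReal (deriv ψ s) := lintegral_mono_ae hu
    _ = ENNReal.ofReal (∫ s in a..b, deriv ψ s) := by
      rw [intervalIntegral.integral_of_le hab, integral_Ioc_eq_integral_Ioo,
        ofReal_integral_eq_lintegral_ofReal hint hnonneg]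
    _ ≤ ENNReal.ofReal (ψ b - ψ a) := by
      refine ENNReal.ofReal_le_ofReal ?_
      have h := hψ.intervalIntegral_deriv_mem_uIcc
      rw [uIcc_of_le (sub_nonneg.2 hψab)] at h
      exact h.2

theorem monotone_setIntegral_of_nonneg {α : Type*} [MeasurableSpace α] {μ : Measure α}
    {F : ℝ → Set α} (hF : Monotone F) {f : α → ℝ} (hf0 : ∀ x, 0 ≤ f x)
    (hf : ∀ t, IntegrableOn f (F t) μ) : Monotone fun t => ∫ x in F t, f x ∂μ :=
  fun _ t hst => setIntegral_mono_set (hf t) (Eventually.of_forall hf0) (hF hst).eventuallyLE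

structure IsNestedFamily {α : Type*} [MeasurableSpace α] (μ : Measure α) (F : ℝ → Set α)
    (m : ℝ) : Prop where
  mono : Monotone F
  measurableSet : ∀ t, MeasurableSet (F t)
  measure_ne_top : ∀ t, μ (F t) ≠ ∞
  measureReal_eq : ∀ t ∈ Icc 0 m, μ.real (F t) = t

namespace IsNestedFamily

variable {α : Type*} [MeasurableSpace α] {μ : Measure α} {F : ℝ → Set α} {m : ℝ}

theorem measureReal_sdiff_eq (hF : IsNestedFamily μ F m) {s y : ℝ} (hs : 0 ≤ s) (hsy : s ≤ y)
    (hy : y ≤ m) : μ.real (F y \ F s) = y - s := by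
  rw [measureReal_sdiff (hF.mono hsy) (hF.measurableSet s) (hF.measure_ne_top y),
    hF.measureReal_eq y ⟨hs.trans hsy, hy⟩, hF.measureReal_eq s ⟨hs, hsy.trans hy⟩]

theorem measure_sdiff_ne_zero (hF : IsNestedFamily μ F m) {s y : ℝ} (hs : 0 ≤ s) (hsy : s < y)
    (hy : y ≤ m) : μ (F y \ F s) ≠ 0 := by
  intro h
  have := hF.measureReal_sdiff_eq hs hsy.le hy
  rw [measureReal_def, h, toReal_zero] at this
  linarith

theorem measure_sdiff_ne_top (hF : IsNestedFamily μ F m) (s y : ℝ) : μ (F y \ F s) ≠ ∞ :=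
  measure_ne_top_of_subset sdiff_subset (hF.measure_ne_top y)

theorem slope_setIntegral_eq_setAverage (hF : IsNestedFamily μ F m) {f : α → ℝ}
    (hf : ∀ t, IntegrableOn f (F t) μ) {s y : ℝ} (hs : 0 ≤ s) (hsy : s < y) (hy : y ≤ m) :
    slope (fun t => ∫ x in F t, f x ∂μ) s y = ⨍ x in F y \ F s, f x ∂μ := by
  rw [slope_def_field, setAverage_eq,
    setIntegral_sdiff (hF.measurableSet s) (hf y) (hF.mono hsy.le),
    hF.measureReal_sdiff_eq hs hsy.le hy, smul_eq_mul, div_eq_inv_mul]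

theorem integrableOn_of_memLp (hF : IsNestedFamily μ F m) {Ω : Set α} (hFΩ : ∀ t, F t ⊆ Ω)
    {g : α → ℝ} {r : ℝ≥0∞} (hr : 1 ≤ r) (hg : MemLp g r (μ.restrict Ω)) (t : ℝ) :
    IntegrableOn g (F t) μ :=
  have := isFiniteMeasure_restrict.2 (hF.measure_ne_top t)
  (hg.mono_measure (Measure.restrict_mono (hFΩ t) le_rfl)).integrable hr

theorem le_of_hasDerivAt_of_ae_le (hF : IsNestedFamily μ F m) {f : α → ℝ} {C d s : ℝ}
    (hf : ∀ t, IntegrableOn f (F t) μ) (hC : ∀ t, ∀ᵐ x ∂μ.restrict (F t), f x ≤ C)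
    (hs : s ∈ Ioo 0 m) (hd : HasDerivAt (fun t => ∫ x in F t, f x ∂μ) d s) : d ≤ C := by
  refine le_of_tendsto (hd.tendsto_slope.mono_left (nhdsGT_le_nhdsNE s)) ?_
  filter_upwards [Ioo_mem_nhdsGT hs.2] with y hy
  have hE := hF.measureReal_sdiff_eq hs.1.le hy.1.le hy.2.le
  have hint : ∫ x in F y \ F s, f x ∂μ ≤ C * (y - s) :=
    calc ∫ x in F y \ F s, f x ∂μ ≤ ∫ _ in F y \ F s, C ∂μ :=
          setIntegral_mono_ae_restrict ((hf y).mono_set sdiff_subset)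
            (integrableOn_const (hF.measure_sdiff_ne_top s y))
            (ae_restrict_of_ae_restrict_of_subset sdiff_subset (hC y))
      _ = C * (y - s) := by rw [setIntegral_const, hE, smul_eq_mul, mul_comm]
  rw [hF.slope_setIntegral_eq_setAverage hf hs.1.le hy.1 hy.2.le, setAverage_eq, hE, smul_eq_mul,
    inv_mul_le_iff₀ (sub_pos.2 hy.1)]
  linarith

theorem rpow_le_of_hasDerivAt (hF : IsNestedFamily μ F m) {f : α → ℝ} {p d e s : ℝ}
    (hp : 1 ≤ p) (hf0 : ∀ x, 0 ≤ f x) (hf : ∀ t, IntegrableOn f (F t) μ)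
    (hfp : ∀ t, IntegrableOn (fun x => f x ^ p) (F t) μ) (hs : s ∈ Ioo 0 m)
    (hd : HasDerivAt (fun t => ∫ x in F t, f x ∂μ) d s)
    (he : HasDerivAt (fun t => ∫ x in F t, f x ^ p ∂μ) e s) : d ^ p ≤ e := by
  refine le_of_tendsto_of_tendsto
    ((hd.tendsto_slope.mono_left (nhdsGT_le_nhdsNE s)).rpow_const (Or.inr (by linarith)))
    (he.tendsto_slope.mono_left (nhdsGT_le_nhdsNE s)) ?_
  filter_upwards [Ioo_mem_nhdsGT hs.2] with y hy
  rw [hF.slope_setIntegral_eq_setAverage hf hs.1.le hy.1 hy.2.le,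
    hF.slope_setIntegral_eq_setAverage hfp hs.1.le hy.1 hy.2.le]
  exact (convexOn_rpow hp).map_set_average_le
    (Real.continuous_rpow_const (by linarith)).continuousOn isClosed_Ici
    (hF.measure_sdiff_ne_zero hs.1.le hy.1 hy.2.le) (hF.measure_sdiff_ne_top s y)
    (ae_of_all _ hf0) ((hf y).mono_set sdiff_subset) ((hfp y).mono_set sdiff_subset)

variable {Ω : Set α} {g : α → ℝ} {D : ℝ → ℝ}

theorem eLpNorm_top_le (hF : IsNestedFamily μ F m) (hFΩ : ∀ t, F t ⊆ Ω)
    (hg : MemLp g ∞ (μ.restrict Ω))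
    (hD : ∀ᵐ s ∂volume.restrict (Ioo 0 m), HasDerivAt (fun t => ∫ x in F t, |g x| ∂μ) (D s) s) :
    eLpNorm D ∞ (volume.restrict (Ioo 0 m)) ≤ eLpNorm g ∞ (μ.restrict Ω) := by
  set C := eLpNormEssSup g (μ.restrict Ω)
  have hC : C ≠ ∞ := by simpa only [eLpNorm_exponent_top] using hg.2.ne
  have hgi := fun t => (hF.integrableOn_of_memLp hFΩ le_top hg t).abs
  have hφ := monotone_setIntegral_of_nonneg hF.mono (fun x => abs_nonneg (g x)) hgi
  have hgC : ∀ t, ∀ᵐ x ∂μ.restrict (F t), |g x| ≤ C.toReal := by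
    intro t
    refine ae_restrict_of_ae_restrict_of_subset (hFΩ t) ?_
    filter_upwards [ae_le_eLpNormEssSup (f := g) (μ := μ.restrict Ω)] with x hx
    rw [← Real.norm_eq_abs, ← toReal_enorm (g x)]
    exact toReal_mono hC hx
  have hDC : ∀ᵐ s ∂volume.restrict (Ioo 0 m), ‖D s‖ ≤ C.toReal := by
    filter_upwards [hD, ae_restrict_mem measurableSet_Ioo] with s hd hs
    rw [Real.norm_eq_abs, abs_of_nonneg (hd.nonneg_of_monotone hφ)]
    exact hF.le_of_hasDerivAt_of_ae_le hgi hgC hs hd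
  rw [eLpNorm_exponent_top, eLpNorm_exponent_top]
  exact (eLpNormEssSup_le_of_ae_bound hDC).trans ofReal_toReal_le

theorem eLpNorm_le_of_ne_top (hF : IsNestedFamily μ F m) (hFΩ : ∀ t, F t ⊆ Ω) {r : ℝ≥0∞}
    (hr : 1 ≤ r) (hr' : r ≠ ∞) (hg : MemLp g r (μ.restrict Ω))
    (hD : ∀ᵐ s ∂volume.restrict (Ioo 0 m), HasDerivAt (fun t => ∫ x in F t, |g x| ∂μ) (D s) s) :
    eLpNorm D r (volume.restrict (Ioo 0 m)) ≤ eLpNorm g r (μ.restrict Ω) := by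
  have hr0 : r ≠ 0 := (zero_lt_one.trans_le hr).ne'
  set p := r.toReal
  have hp : 1 ≤ p := by simpa using toReal_mono hr' hr
  have hgi := fun t => (hF.integrableOn_of_memLp hFΩ hr hg t).abs
  have hgp : IntegrableOn (fun x => |g x| ^ p) Ω μ := by
    have h := hg.integrable_norm_rpow hr0 hr'
    simp only [Real.norm_eq_abs] at h
    exact h
  have hgpi : ∀ t, IntegrableOn (fun x => |g x| ^ p) (F t) μ := fun t => hgp.mono_set (hFΩ t)
  have hφ := monotone_setIntegral_of_nonneg hF.mono (fun x => abs_nonneg (g x)) hgi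
  have hψ := monotone_setIntegral_of_nonneg hF.mono (fun x => by positivity) hgpi
  have hDψ : ∀ᵐ s ∂volume.restrict (Ioo 0 m),
      ‖D s‖ₑ ^ p ≤ ENNReal.ofReal (deriv (fun t => ∫ x in F t, |g x| ^ p ∂μ) s) := by
    filter_upwards [hD, ae_restrict_mem measurableSet_Ioo,
      ae_restrict_of_ae hψ.ae_differentiableAt] with s hd hs hψs
    have hd0 := hd.nonneg_of_monotone hφ
    rw [Real.enorm_eq_ofReal hd0, ofReal_rpow_of_nonneg hd0 (by linarith)]
    exact ofReal_le_ofReal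
      (hF.rpow_le_of_hasDerivAt hp (fun x => abs_nonneg _) hgi hgpi hs hd hψs.hasDerivAt)
  have hψm : (∫ x in F m, |g x| ^ p ∂μ) - ∫ x in F 0, |g x| ^ p ∂μ ≤ ∫ x in Ω, |g x| ^ p ∂μ := by
    have hψ0 : 0 ≤ ∫ x in F 0, |g x| ^ p ∂μ :=
      setIntegral_nonneg (hF.measurableSet 0) fun x _ => by positivity
    have hψΩ := setIntegral_mono_set hgp (Eventually.of_forall fun x => by positivity)
      (hFΩ m).eventuallyLE
    linarith
  have hlin : ∫⁻ s in Ioo 0 m, ‖D s‖ₑ ^ p ≤ ENNReal.ofReal (∫ x in Ω, |g x| ^ p ∂μ) :=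
    ((hψ.monotoneOn _).lintegral_le_of_ae_le_deriv hDψ).trans (ofReal_le_ofReal hψm)
  rw [eLpNorm_eq_lintegral_rpow_enorm_toReal hr0 hr', hg.eLpNorm_eq_integral_rpow_norm hr0 hr',
    ← ofReal_rpow_of_nonneg (integral_nonneg fun x => by positivity) (by positivity)]
  simp only [Real.norm_eq_abs, one_div]
  gcongr

theorem eLpNorm_le (hF : IsNestedFamily μ F m) (hFΩ : ∀ t, F t ⊆ Ω) {r : ℝ≥0∞} (hr : 1 ≤ r)
    (hg : MemLp g r (μ.restrict Ω))
    (hD : ∀ᵐ s ∂volume.restrict (Ioo 0 m), HasDerivAt (fun t => ∫ x in F t, |g x| ∂μ) (D s) s) :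
    eLpNorm D r (volume.restrict (Ioo 0 m)) ≤ eLpNorm g r (μ.restrict Ω) := by
  rcases eq_or_ne r ∞ with rfl | hr'
  · exact hF.eLpNorm_top_le hFΩ hg hD
  · exact hF.eLpNorm_le_of_ne_top hFΩ hr hr' hg hD

end IsNestedFamily

theorem stmt_7_general {N : ℕ} (Ω : Set (EuclideanSpace ℝ (Fin N)))
    (hΩb : Bornology.IsBounded Ω)
    (g : EuclideanSpace ℝ (Fin N) → ℝ)
    (r : ℝ≥0∞) (hr : 1 ≤ r)
    (hg : MemLp g r (volume.restrict Ω))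
    (F : ℝ → Set (EuclideanSpace ℝ (Fin N)))
    (hFmeas : ∀ s, MeasurableSet (F s))
    (hFsub : ∀ s, F s ⊆ Ω)
    (hFvol : ∀ s ∈ Icc (0 : ℝ) (volume Ω).toReal, (volume (F s)).toReal = s)
    (hFmono : ∀ s₁ s₂, s₁ < s₂ → F s₁ ⊆ F s₂)
    (D : ℝ → ℝ)
    (hD : ∀ᵐ s ∂(volume.restrict (Ioo (0 : ℝ) (volume Ω).toReal)),
      HasDerivAt (fun t => ∫ x in F t, |g x|) (D s) s) :
    MemLp D r (volume.restrict (Ioo (0 : ℝ) (volume Ω).toReal)) ∧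
      eLpNorm D r (volume.restrict (Ioo (0 : ℝ) (volume Ω).toReal))
        ≤ eLpNorm g r (volume.restrict Ω) := by
  have hF : IsNestedFamily volume F (volume Ω).toReal :=
    { mono := monotone_iff_forall_lt.2 hFmono
      measurableSet := hFmeas
      measure_ne_top := fun t => measure_ne_top_of_subset (hFsub t) hΩb.measure_lt_top.ne
      measureReal_eq := hFvol }
  have hle := hF.eLpNorm_le hFsub hr hg hD
  exact ⟨⟨aestronglyMeasurable_of_ae_hasDerivAt hD, hle.trans_lt hg.2⟩, hle⟩

/-- The pseudo-rearrangement of `g` has the same `Lʳ` summability as `g`,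
with `‖D‖_{Lʳ(0,|Ω|)} ≤ ‖g‖_{Lʳ(Ω)}`. -/
theorem stmt_7 {N : ℕ} (Ω : Set (EuclideanSpace ℝ (Fin N)))
    (hΩm : MeasurableSet Ω) (hΩb : Bornology.IsBounded Ω)
    (v : EuclideanSpace ℝ (Fin N) → ℝ) (hv : Measurable v)
    (g : EuclideanSpace ℝ (Fin N) → ℝ)
    (r : ℝ≥0∞) (hr : 1 ≤ r)
    (hg : MemLp g r (volume.restrict Ω))
    (F : ℝ → Set (EuclideanSpace ℝ (Fin N)))
    (hFmeas : ∀ s, MeasurableSet (F s))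
    (hFsub : ∀ s, F s ⊆ Ω)
    (hFvol : ∀ s ∈ Icc (0 : ℝ) (volume Ω).toReal, (volume (F s)).toReal = s)
    (hFmono : ∀ s₁ s₂, s₁ < s₂ → F s₁ ⊆ F s₂)
    (D : ℝ → ℝ)
    (hD : ∀ᵐ s ∂(volume.restrict (Ioo (0 : ℝ) (volume Ω).toReal)),
      HasDerivAt (fun t => ∫ x in F t, |g x|) (D s) s) :
    MemLp D r (volume.restrict (Ioo (0 : ℝ) (volume Ω).toReal)) ∧
      eLpNorm D r (volume.restrict (Ioo (0 : ℝ) (volume Ω).toReal))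
        ≤ eLpNorm g r (volume.restrict Ω) :=
  stmt_7_general Ω hΩb g r hr hg F hFmeas hFsub hFvol hFmono D hD
end

section
/- If g belongs to the Marcinkiewicz space M^s(Ω) with 1 < s < ∞, then the pseudo-rearrangement D of g with respect to a measurable function v belongs to M^s(0,|Ω|); more precisely its decreasing rearrangement satisfies D̄(t) ≤ (1/t)∫₀ᵗ ḡ ≤ ‖g‖_{M^s} · (s/(s−1)) · t^{−1/s}. -/
open MeasureTheory Set

/-- Decreasing rearrangement of a function on `(0,M) ⊂ ℝ`. -/
noncomputable def rearr1 (M : ℝ) (D : ℝ → ℝ) (t : ℝ) : ℝ :=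
  sInf {τ : ℝ | 0 ≤ τ ∧ (volume {s ∈ Ioo (0 : ℝ) M | |D s| > τ}).toReal < t}

open Filter Topology
open scoped ENNReal

/-!
The pseudo-rearrangement `D` is a.e. the derivative of the monotone function
`G σ = ∫_{Ω(σ)} |g|`, hence the Radon–Nikodym density of its Stieltjes measure `ν`. Sending each
point to the parameter at which it enters the nested family `Ω(σ)` pushes Lebesgue measure on `Ω`
to Lebesgue measure on `(0, |Ω|)` and `|g| dx` to `ν`, so the Hardy–Littlewood inequality gives
`ν T ≤ ∫₀^{|T|} ḡ`. If the set `T` where `D` exceeds the average `A = (1/t) ∫₀ᵗ ḡ` had measure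
`e ≥ t`, then `A e < ν T ≤ ∫₀^e ḡ ≤ A e`, because the averages of the decreasing function `ḡ`
decrease. The bound on `A` itself integrates `ḡ τ ≤ K τ^{-1/s}`.
-/

section PowerBound

variable {f : ℝ → ℝ} {K s : ℝ}

lemma le_mul_rpow_neg_of_rpow_mul_le {τ : ℝ} (hτ : 0 < τ) (h : τ ^ (1 / s) * f τ ≤ K) :
    f τ ≤ K * τ ^ (-(1 / s)) := by
  rw [Real.rpow_neg hτ.le, ← div_eq_mul_inv, le_div_iff₀ (Real.rpow_pos_of_pos hτ _), mul_comm]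
  exact h

lemma neg_one_lt_neg_inv (hs : 1 < s) : -1 < -(1 / s) := by
  rw [neg_lt_neg_iff, div_lt_one (by linarith)]
  exact hs

lemma integrableOn_Ioc_of_le_mul_rpow (hs : 1 < s) {b : ℝ}
    (hf : AEStronglyMeasurable f (volume.restrict (Ioc 0 b)))
    (h : ∀ τ ∈ Ioc 0 b, ‖f τ‖ ≤ K * τ ^ (-(1 / s))) : IntegrableOn f (Ioc 0 b) :=
  Integrable.mono' ((intervalIntegral.intervalIntegrable_rpow' (neg_one_lt_neg_inv hs)).const_mul
    K).1 hf ((ae_restrict_iff' measurableSet_Ioc).2 (ae_of_all _ h))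

lemma average_le_of_le_mul_rpow (hs : 1 < s) {t : ℝ} (ht : 0 < t)
    (hf : IntervalIntegrable f volume 0 t) (h : ∀ τ ∈ Ioo 0 t, f τ ≤ K * τ ^ (-(1 / s))) :
    (1 / t) * ∫ τ in (0 : ℝ)..t, f τ ≤ K * (s / (s - 1)) * t ^ (-(1 / s)) := by
  have hexp := neg_one_lt_neg_inv hs
  have hpow : ∫ τ in (0 : ℝ)..t, τ ^ (-(1 / s)) = s / (s - 1) * (t * t ^ (-(1 / s))) := by
    rw [integral_rpow (Or.inl hexp), Real.zero_rpow (by linarith), Real.rpow_add ht,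
      Real.rpow_one]
    field_simp
    ring
  calc (1 / t) * ∫ τ in (0 : ℝ)..t, f τ
      ≤ (1 / t) * ∫ τ in (0 : ℝ)..t, K * τ ^ (-(1 / s)) := by
        gcongr
        exact intervalIntegral.integral_mono_on_of_le_Ioo ht.le hf
          ((intervalIntegral.intervalIntegrable_rpow' hexp).const_mul K) h
    _ = K * (s / (s - 1)) * t ^ (-(1 / s)) := by
        rw [intervalIntegral.integral_const_mul, hpow]
        field_simp

end PowerBound

lemma mul_integral_le_mul_integral_of_antitoneOn {f : ℝ → ℝ} (hf : AntitoneOn f (Ioi 0))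
    {t e : ℝ} (ht : 0 < t) (hte : t ≤ e) (hfi : IntervalIntegrable f volume 0 e) :
    t * ∫ τ in (0 : ℝ)..e, f τ ≤ e * ∫ τ in (0 : ℝ)..t, f τ := by
  have htmem : t ∈ uIcc 0 e := mem_uIcc.2 (Or.inl ⟨ht.le, hte⟩)
  have hfi₁ : IntervalIntegrable f volume 0 t :=
    hfi.mono_set (uIcc_subset_uIcc left_mem_uIcc htmem)
  have hfi₂ : IntervalIntegrable f volume t e :=
    hfi.mono_set (uIcc_subset_uIcc htmem right_mem_uIcc)
  have hhead : t * f t ≤ ∫ τ in (0 : ℝ)..t, f τ := by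
    have := intervalIntegral.integral_mono_on_of_le_Ioo ht.le intervalIntegrable_const hfi₁
      fun τ hτ => hf hτ.1 ht hτ.2.le
    simpa [mul_comm] using this
  have htail : ∫ τ in t..e, f τ ≤ (e - t) * f t := by
    have := intervalIntegral.integral_mono_on_of_le_Ioo hte hfi₂ intervalIntegrable_const
      fun τ hτ => hf ht (ht.trans hτ.1) hτ.1.le
    simpa using this
  rw [← intervalIntegral.integral_add_adjacent_intervals hfi₁ hfi₂]
  nlinarith [mul_le_mul_of_nonneg_left hhead (sub_nonneg.2 hte),
    mul_le_mul_of_nonneg_left htail ht.le]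

lemma ofReal_mul_lt_of_lt_rnDeriv {α : Type*} [MeasurableSpace α] {μ ν : Measure α} {T : Set α}
    {A : ℝ} (hA : 0 ≤ A) (hT : MeasurableSet T) (hT₀ : μ T ≠ 0) (hT_top : μ T ≠ ∞)
    (hlt : ∀ x ∈ T, A < (ν.rnDeriv μ x).toReal) : ENNReal.ofReal A * μ T < ν T :=
  calc ENNReal.ofReal A * μ T = ∫⁻ _ in T, ENNReal.ofReal A ∂μ := (setLIntegral_const _ _).symm
    _ < ∫⁻ x in T, ν.rnDeriv μ x ∂μ := by
        refine setLIntegral_strict_mono hT hT₀ (Measure.measurable_rnDeriv ν μ)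
          (by simpa [setLIntegral_const] using ENNReal.mul_ne_top ENNReal.ofReal_ne_top hT_top)
          (ae_of_all _ fun x hx => ?_)
        rcases eq_or_ne (ν.rnDeriv μ x) ∞ with htop | htop
        · simp [htop]
        · exact (ENNReal.ofReal_lt_iff_lt_toReal hA htop).2 (hlt x hx)
    _ ≤ ν T := Measure.setLIntegral_rnDeriv_le T

section Rearrangement

variable {N : ℕ} {Ω : Set (EuclideanSpace ℝ (Fin N))} {g : EuclideanSpace ℝ (Fin N) → ℝ}

lemma rearr_nonneg (τ : ℝ) : 0 ≤ rearr Ω g τ :=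
  Real.sInf_nonneg fun _ h => h.1

lemma bddBelow_rearr_set (τ : ℝ) :
    BddBelow {t : ℝ | 0 ≤ t ∧ (volume {x ∈ Ω | |g x| > t}).toReal < τ} :=
  ⟨0, fun _ h => h.1⟩

lemma volume_superlevel_ne_top (hΩ : volume Ω ≠ ∞) (l : ℝ) : volume {x ∈ Ω | |g x| > l} ≠ ∞ :=
  ne_top_of_le_ne_top hΩ (measure_mono fun _ hx => hx.1)

lemma nonempty_rearr_set (hΩm : MeasurableSet Ω) (hg : Measurable g) (hΩ : volume Ω ≠ ∞)
    {τ : ℝ} (hτ : 0 < τ) :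
    {t : ℝ | 0 ≤ t ∧ (volume {x ∈ Ω | |g x| > t}).toReal < τ}.Nonempty := by
  have hempty : ⋂ t : ℝ, {x ∈ Ω | |g x| > t} = ∅ :=
    eq_empty_of_forall_notMem fun x hx => (lt_irrefl _) (mem_iInter.1 hx |g x|).2
  have htend : Tendsto (fun t : ℝ => volume {x ∈ Ω | |g x| > t}) atTop (𝓝 0) := by
    have := tendsto_measure_iInter_atTop (s := fun t : ℝ => {x ∈ Ω | |g x| > t})
      (fun t => (hΩm.inter (measurableSet_lt measurable_const hg.abs)).nullMeasurableSet)
      (fun a b hab x hx => ⟨hx.1, hab.trans_lt hx.2⟩) ⟨0, volume_superlevel_ne_top hΩ 0⟩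
    rwa [hempty, measure_empty] at this
  obtain ⟨t, hlt, ht⟩ := ((htend.eventually (gt_mem_nhds (ENNReal.ofReal_pos.2 hτ))).and
    (eventually_ge_atTop 0)).exists
  exact ⟨t, ht, by simpa [hτ.le] using ENNReal.toReal_lt_of_lt_ofReal hlt⟩

lemma rearr_antitoneOn (hΩm : MeasurableSet Ω) (hg : Measurable g) (hΩ : volume Ω ≠ ∞) :
    AntitoneOn (rearr Ω g) (Ioi 0) := fun _ h₁ _ _ h₁₂ =>
  csInf_le_csInf (bddBelow_rearr_set _) (nonempty_rearr_set hΩm hg hΩ h₁)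
    fun _ hu => ⟨hu.1, hu.2.trans_le h₁₂⟩

/-- The distribution function is right-continuous, so `ḡ τ ≤ λ` forces `μ_g(λ) ≤ τ`. -/
lemma lt_rearr_of_lt_volume (hΩm : MeasurableSet Ω) (hg : Measurable g) (hΩ : volume Ω ≠ ∞)
    {τ l : ℝ} (hτ : 0 < τ) (h : τ < (volume {x ∈ Ω | |g x| > l}).toReal) : l < rearr Ω g τ := by
  by_contra! hle
  have hlev : ∀ u > l, volume {x ∈ Ω | |g x| > u} ≤ ENNReal.ofReal τ := by
    intro u hu
    obtain ⟨w, hw, hwu⟩ := exists_lt_of_csInf_lt (nonempty_rearr_set hΩm hg hΩ hτ)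
      (hle.trans_lt hu)
    calc volume {x ∈ Ω | |g x| > u} ≤ volume {x ∈ Ω | |g x| > w} :=
          measure_mono fun x hx => ⟨hx.1, hwu.trans hx.2⟩
      _ ≤ ENNReal.ofReal τ :=
          (ENNReal.le_ofReal_iff_toReal_le (volume_superlevel_ne_top hΩ w) hτ.le).2 hw.2.le
  have hunion : {x ∈ Ω | |g x| > l} = ⋃ n : ℕ, {x ∈ Ω | |g x| > l + 1 / (n + 1)} := by
    ext x
    simp only [mem_iUnion]
    refine ⟨fun hx => ?_, fun ⟨n, hx⟩ => ⟨hx.1, lt_trans (by simp; positivity) hx.2⟩⟩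
    obtain ⟨n, hn⟩ := exists_nat_one_div_lt (sub_pos.2 hx.2)
    exact ⟨n, hx.1, by linarith⟩
  have hmono : Monotone fun n : ℕ => {x ∈ Ω | |g x| > l + 1 / (n + 1)} :=
    fun m n hmn x hx => ⟨hx.1, lt_of_le_of_lt (by gcongr) hx.2⟩
  have : volume {x ∈ Ω | |g x| > l} ≤ ENNReal.ofReal τ := by
    rw [hunion, hmono.measure_iUnion]
    exact iSup_le fun n => hlev _ (by simp; positivity)
  exact h.not_ge (ENNReal.toReal_le_of_le_ofReal hτ.le this)

theorem lintegral_abs_le_lintegral_rearr (hΩm : MeasurableSet Ω) (hg : Measurable g)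
    (hΩ : volume Ω ≠ ∞) {S : Set (EuclideanSpace ℝ (Fin N))} (hSΩ : S ⊆ Ω) :
    ∫⁻ x in S, ENNReal.ofReal |g x| ≤
      ∫⁻ τ in Ioc 0 (volume S).toReal, ENNReal.ofReal (rearr Ω g τ) := by
  set σ := (volume S).toReal
  have hS : volume S ≠ ∞ := ne_top_of_le_ne_top hΩ (measure_mono hSΩ)
  rw [lintegral_eq_lintegral_meas_lt _ (ae_of_all _ fun _ => abs_nonneg _) hg.abs.aemeasurable,
    lintegral_eq_lintegral_meas_lt _ (ae_of_all _ rearr_nonneg)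
      (aemeasurable_restrict_of_antitoneOn measurableSet_Ioc
        ((rearr_antitoneOn hΩm hg hΩ).mono fun _ hτ => hτ.1))]
  refine setLIntegral_mono' measurableSet_Ioi fun l hl => ?_
  set r := (volume {x ∈ Ω | |g x| > l}).toReal
  rw [Measure.restrict_apply (measurableSet_lt measurable_const hg.abs),
    Measure.restrict_apply' measurableSet_Ioc]
  calc volume ({x | l < |g x|} ∩ S)
      ≤ min (volume S) (volume {x ∈ Ω | |g x| > l}) :=
        le_min (measure_mono inter_subset_right) (measure_mono fun x hx => ⟨hSΩ hx.2, hx.1⟩)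
    _ = volume (Ioo 0 (min σ r)) := by
        rw [Real.volume_Ioo, sub_zero, ENNReal.ofReal_min, ENNReal.ofReal_toReal hS,
          ENNReal.ofReal_toReal (volume_superlevel_ne_top hΩ l)]
    _ ≤ volume ({τ | l < rearr Ω g τ} ∩ Ioc 0 σ) := measure_mono fun τ hτ =>
        ⟨lt_rearr_of_lt_volume hΩm hg hΩ hτ.1 (hτ.2.trans_le (min_le_right _ _)),
          hτ.1, (hτ.2.trans_le (min_le_left _ _)).le⟩

end Rearrangement

section LevelFunction

variable {α : Type*} {F : ℝ → Set α} {c : ℝ}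

noncomputable def levelFun (F : ℝ → Set α) (c : ℝ) (x : α) : ℝ :=
  sInf (insert c {σ | 0 ≤ σ ∧ x ∈ F σ})

lemma bddBelow_levelFun_set (hc : 0 ≤ c) (x : α) : BddBelow (insert c {σ | 0 ≤ σ ∧ x ∈ F σ}) :=
  ⟨0, by rintro σ (rfl | ⟨hσ, -⟩) <;> assumption⟩

lemma measurable_levelFun [MeasurableSpace α] (hF : Monotone F)
    (hFm : ∀ σ, MeasurableSet (F σ)) (hc : 0 ≤ c) : Measurable (levelFun F c) := by
  refine measurable_of_Iio fun a => ?_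
  have hpre : levelFun F c ⁻¹' Iio a =
      {_x | c < a} ∪ ⋃ q ∈ {q : ℚ | 0 ≤ (q : ℝ) ∧ (q : ℝ) < a}, F q := by
    ext x
    simp only [mem_preimage, mem_Iio, levelFun, csInf_lt_iff (bddBelow_levelFun_set hc x)
      (insert_nonempty _ _), exists_mem_insert, mem_union, mem_iUnion₂]
    refine or_congr Iff.rfl ⟨?_, ?_⟩
    · rintro ⟨σ, ⟨hσ, hx⟩, hσa⟩
      obtain ⟨q, hσq, hqa⟩ := exists_rat_btwn hσa
      exact ⟨q, ⟨hσ.trans hσq.le, hqa⟩, hF hσq.le hx⟩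
    · rintro ⟨q, ⟨hq, hqa⟩, hx⟩
      exact ⟨q, ⟨hq, hx⟩, hqa⟩
  rw [hpre]
  exact (MeasurableSet.const _).union (.biUnion (to_countable _) fun q _ => hFm q)

lemma levelFun_le_iff (hF : Monotone F) (hc : 0 ≤ c) {x : α} (hx : x ∈ F c \ F 0) {b : ℝ} :
    levelFun F c x ≤ b ↔ ∀ r > b, x ∈ F r := by
  refine ⟨fun h r hr => ?_, fun h => le_of_forall_gt_imp_ge_of_dense fun r hr => ?_⟩
  · obtain ⟨σ, hσ, hσr⟩ := exists_lt_of_csInf_lt (insert_nonempty _ _) (h.trans_lt hr)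
    rcases hσ with rfl | ⟨-, hσ⟩
    exacts [hF hσr.le hx.1, hF hσr.le hσ]
  · have hr₀ : 0 ≤ r := not_lt.1 fun hr₀ => hx.2 (hF hr₀.le (h r hr))
    exact csInf_le (bddBelow_levelFun_set hc x) (mem_insert_of_mem _ ⟨hr₀, h r hr⟩)

theorem map_levelFun_eq [MeasurableSpace α] {m : Measure α} [IsFiniteMeasure m] {ν : Measure ℝ}
    (hF : Monotone F) (hFm : ∀ σ, MeasurableSet (F σ)) (hc : 0 ≤ c) (hm : ∀ᵐ x ∂m, x ∈ F c \ F 0)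
    (hν : ∀ b, Tendsto (fun r => m (F r)) (𝓝[>] b) (𝓝 (ν (Iic b)))) :
    m.map (levelFun F c) = ν := by
  refine Measure.ext_of_Iic _ _ fun b => ?_
  rw [Measure.map_apply (measurable_levelFun hF hFm hc) measurableSet_Iic]
  have hae : levelFun F c ⁻¹' Iic b =ᵐ[m] ⋂ r > b, F r := eventuallyEq_set.2 <|
    hm.mono fun x hx => by
      simpa only [mem_preimage, mem_Iic, mem_iInter₂] using levelFun_le_iff hF hc hx
  rw [measure_congr hae]
  exact tendsto_nhds_unique (tendsto_measure_biInter_gt (fun r _ => (hFm r).nullMeasurableSet)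
    (fun _ _ _ h => hF h) ⟨b + 1, by simp, measure_ne_top _ _⟩) (hν b)

end LevelFunction

section NestedFamily

variable {α : Type*} [MeasurableSpace α] {μ : Measure α} {Ω : Set α} {F : ℝ → Set α}

lemma measure_nested_eq (hΩ : μ Ω ≠ ∞) (hFsub : ∀ σ, F σ ⊆ Ω)
    (hFvol : ∀ σ ∈ Icc (0 : ℝ) (μ Ω).toReal, (μ (F σ)).toReal = σ) (hF : Monotone F) (σ : ℝ) :
    μ (F σ) = ENNReal.ofReal (min σ (μ Ω).toReal) := by
  set M := (μ Ω).toReal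
  have hM : 0 ≤ M := ENNReal.toReal_nonneg
  have hmid : ∀ σ ∈ Icc 0 M, μ (F σ) = ENNReal.ofReal σ := fun σ hσ => by
    rw [← ENNReal.ofReal_toReal (ne_top_of_le_ne_top hΩ (measure_mono (hFsub σ))), hFvol σ hσ]
  rcases lt_or_ge σ 0 with hσ | hσ
  · rw [ENNReal.ofReal_of_nonpos ((min_le_left _ _).trans hσ.le)]
    exact measure_mono_null (hF hσ.le) (by simp [hmid 0 ⟨le_rfl, hM⟩])
  rcases le_or_gt σ M with hσM | hσM
  · rw [min_eq_left hσM, hmid σ ⟨hσ, hσM⟩]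
  · rw [min_eq_right hσM.le]
    exact le_antisymm ((measure_mono (hFsub σ)).trans (ENNReal.ofReal_toReal hΩ).ge)
      ((hmid M ⟨hM, le_rfl⟩).ge.trans (measure_mono (hF hσM.le)))

lemma ae_restrict_mem_nested (hΩm : MeasurableSet Ω) (hΩ : μ Ω ≠ ∞)
    (hFm : ∀ σ, MeasurableSet (F σ)) (hFsub : ∀ σ, F σ ⊆ Ω)
    (hFvol : ∀ σ ∈ Icc (0 : ℝ) (μ Ω).toReal, (μ (F σ)).toReal = σ) (hF : Monotone F) :
    ∀ᵐ x ∂μ.restrict Ω, x ∈ F (μ Ω).toReal \ F 0 := by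
  have hnest := measure_nested_eq hΩ hFsub hFvol hF
  have htop : μ (Ω \ F (μ Ω).toReal) = 0 := by
    rw [measure_sdiff (hFsub _) (hFm _).nullMeasurableSet
      (ne_top_of_le_ne_top hΩ (measure_mono (hFsub _))), hnest, min_self,
      ENNReal.ofReal_toReal hΩ, tsub_self]
  have hbot : μ (F 0) = 0 := by simp [hnest]
  rw [ae_restrict_iff' hΩm]
  filter_upwards [measure_eq_zero_iff_ae_notMem.1 htop, measure_eq_zero_iff_ae_notMem.1 hbot]
    with x hx₁ hx₀ hxΩ
  exact ⟨not_not.1 fun h => hx₁ ⟨hxΩ, h⟩, hx₀⟩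

theorem map_levelFun_restrict (hΩm : MeasurableSet Ω) (hΩ : μ Ω ≠ ∞)
    (hFm : ∀ σ, MeasurableSet (F σ)) (hFsub : ∀ σ, F σ ⊆ Ω)
    (hFvol : ∀ σ ∈ Icc (0 : ℝ) (μ Ω).toReal, (μ (F σ)).toReal = σ) (hF : Monotone F) :
    (μ.restrict Ω).map (levelFun F (μ Ω).toReal) = volume.restrict (Ioc 0 (μ Ω).toReal) := by
  have : IsFiniteMeasure (μ.restrict Ω) := isFiniteMeasure_restrict.2 hΩ
  refine map_levelFun_eq hF hFm ENNReal.toReal_nonneg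
    (ae_restrict_mem_nested hΩm hΩ hFm hFsub hFvol hF) fun b => ?_
  rw [Measure.restrict_apply measurableSet_Iic, inter_comm, Ioc_inter_Iic, Real.volume_Ioc,
    sub_zero, inf_comm]
  refine Tendsto.congr (fun r => ?_) (((ENNReal.continuous_ofReal.comp
    (continuous_id.min continuous_const)).tendsto b).mono_left nhdsWithin_le_nhds)
  rw [Measure.restrict_apply (hFm r), inter_eq_left.2 (hFsub r),
    measure_nested_eq hΩ hFsub hFvol hF]
  rfl

lemma monotone_setIntegral_abs {g : α → ℝ} (hg : IntegrableOn g Ω μ) (hFsub : ∀ σ, F σ ⊆ Ω)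
    (hF : Monotone F) : Monotone fun σ => ∫ x in F σ, |g x| ∂μ := fun _ b hab =>
  setIntegral_mono_set (hg.mono_set (hFsub b)).abs (ae_of_all _ fun _ => abs_nonneg _)
    (hF hab).eventuallyLE

theorem map_levelFun_withDensity (hΩm : MeasurableSet Ω) (hΩ : μ Ω ≠ ∞)
    (hFm : ∀ σ, MeasurableSet (F σ)) (hFsub : ∀ σ, F σ ⊆ Ω)
    (hFvol : ∀ σ ∈ Icc (0 : ℝ) (μ Ω).toReal, (μ (F σ)).toReal = σ) (hF : Monotone F)
    {g : α → ℝ} (hg : IntegrableOn g Ω μ) (hG : Monotone fun σ => ∫ x in F σ, |g x| ∂μ) :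
    ((μ.restrict Ω).withDensity fun x => ENNReal.ofReal |g x|).map (levelFun F (μ Ω).toReal) =
      hG.stieltjesFunction.measure := by
  have : IsFiniteMeasure ((μ.restrict Ω).withDensity fun x => ENNReal.ofReal |g x|) :=
    isFiniteMeasure_withDensity_ofReal hg.abs.2
  have hG₀ : ∀ σ ≤ 0, ∫ x in F σ, |g x| ∂μ = 0 := fun σ hσ => by
    rw [Measure.restrict_eq_zero.2 (by simp [measure_nested_eq hΩ hFsub hFvol hF, hσ]),
      integral_zero_measure]
  have hbot : Tendsto hG.stieltjesFunction atBot (𝓝 0) :=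
    tendsto_const_nhds.congr' <| (eventually_lt_atBot 0).mono fun σ hσ => by
      rw [hG.stieltjesFunction_eq]
      exact le_antisymm ((hG₀ σ hσ.le).symm.le.trans (hG.le_rightLim le_rfl))
        ((hG.rightLim_le hσ).trans_eq (hG₀ 0 le_rfl))
  refine map_levelFun_eq hF hFm ENNReal.toReal_nonneg ((withDensity_absolutelyContinuous _ _).ae_le
    (ae_restrict_mem_nested hΩm hΩ hFm hFsub hFvol hF)) fun b => ?_
  rw [StieltjesFunction.measure_Iic _ hbot, sub_zero, hG.stieltjesFunction_eq]
  refine (ENNReal.tendsto_ofReal (hG.tendsto_rightLim b)).congr fun r => ?_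
  rw [withDensity_apply _ (hFm r), Measure.restrict_restrict (hFm r), inter_eq_left.2 (hFsub r),
    ofReal_integral_eq_lintegral_ofReal (hg.mono_set (hFsub r)).abs
      (ae_of_all _ fun _ => abs_nonneg _)]

end NestedFamily

section Marcinkiewicz

variable {N : ℕ} {Ω : Set (EuclideanSpace ℝ (Fin N))} {g : EuclideanSpace ℝ (Fin N) → ℝ}

lemma intervalIntegrable_rearr (hΩm : MeasurableSet Ω) (hg : Measurable g) (hΩ : volume Ω ≠ ∞)
    {s K : ℝ} (hs : 1 < s) (hMarc : ∀ t > (0 : ℝ), t ^ (1 / s) * rearr Ω g t ≤ K) {b : ℝ}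
    (hb : 0 ≤ b) : IntervalIntegrable (rearr Ω g) volume 0 b :=
  (intervalIntegrable_iff_integrableOn_Ioc_of_le hb).2 <| integrableOn_Ioc_of_le_mul_rpow hs
    (aemeasurable_restrict_of_antitoneOn measurableSet_Ioc
      ((rearr_antitoneOn hΩm hg hΩ).mono fun _ hτ => hτ.1)).aestronglyMeasurable
    fun τ hτ => by
      rw [Real.norm_of_nonneg (rearr_nonneg τ)]
      exact le_mul_rpow_neg_of_rpow_mul_le hτ.1 (hMarc τ hτ.1)

lemma integrableOn_of_intervalIntegrable_rearr (hΩm : MeasurableSet Ω) (hg : Measurable g)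
    (hΩ : volume Ω ≠ ∞) (h : IntervalIntegrable (rearr Ω g) volume 0 (volume Ω).toReal) :
    IntegrableOn g Ω := by
  refine ⟨hg.aestronglyMeasurable, ?_⟩
  rw [← hasFiniteIntegral_norm_iff,
    hasFiniteIntegral_iff_ofReal (ae_of_all _ fun _ => norm_nonneg _)]
  simp only [Real.norm_eq_abs]
  exact (lintegral_abs_le_lintegral_rearr hΩm hg hΩ subset_rfl).trans_lt
    ((hasFiniteIntegral_iff_ofReal (ae_of_all _ rearr_nonneg)).1 h.1.2)

variable {F : ℝ → Set (EuclideanSpace ℝ (Fin N))}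

theorem stieltjesFunction_measure_le_lintegral_rearr (hΩm : MeasurableSet Ω) (hg : Measurable g)
    (hΩ : volume Ω ≠ ∞) (hgi : IntegrableOn g Ω) (hFm : ∀ σ, MeasurableSet (F σ))
    (hFsub : ∀ σ, F σ ⊆ Ω) (hFvol : ∀ σ ∈ Icc (0 : ℝ) (volume Ω).toReal, (volume (F σ)).toReal = σ)
    (hF : Monotone F) (hG : Monotone fun σ => ∫ x in F σ, |g x|) {T : Set ℝ}
    (hT : MeasurableSet T) (hTsub : T ⊆ Ioc 0 (volume Ω).toReal) :
    hG.stieltjesFunction.measure T ≤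
      ∫⁻ τ in Ioc 0 (volume T).toReal, ENNReal.ofReal (rearr Ω g τ) := by
  have hφ := measurable_levelFun hF hFm (c := (volume Ω).toReal) ENNReal.toReal_nonneg
  have hvol : volume (levelFun F (volume Ω).toReal ⁻¹' T ∩ Ω) = volume T := by
    have := congrArg (· T) (map_levelFun_restrict hΩm hΩ hFm hFsub hFvol hF)
    simpa [Measure.map_apply hφ hT, Measure.restrict_apply (hφ hT), Measure.restrict_apply hT,
      inter_eq_left.2 hTsub] using this
  rw [← map_levelFun_withDensity hΩm hΩ hFm hFsub hFvol hF hgi hG, Measure.map_apply hφ hT,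
    withDensity_apply _ (hφ hT), Measure.restrict_restrict (hφ hT), ← hvol]
  exact lintegral_abs_le_lintegral_rearr hΩm hg hΩ inter_subset_right

theorem volume_average_lt_rnDeriv_lt (hΩm : MeasurableSet Ω) (hg : Measurable g)
    (hΩ : volume Ω ≠ ∞) (hint : ∀ b, 0 ≤ b → IntervalIntegrable (rearr Ω g) volume 0 b)
    (hFm : ∀ σ, MeasurableSet (F σ)) (hFsub : ∀ σ, F σ ⊆ Ω)
    (hFvol : ∀ σ ∈ Icc (0 : ℝ) (volume Ω).toReal, (volume (F σ)).toReal = σ) (hF : Monotone F)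
    (hG : Monotone fun σ => ∫ x in F σ, |g x|) {t : ℝ} (ht : 0 < t) :
    (volume {σ ∈ Ioo 0 (volume Ω).toReal | (1 / t) * ∫ τ in (0 : ℝ)..t, rearr Ω g τ <
      (hG.stieltjesFunction.measure.rnDeriv volume σ).toReal}).toReal < t := by
  set A := (1 / t) * ∫ τ in (0 : ℝ)..t, rearr Ω g τ
  set T :=
    {σ ∈ Ioo 0 (volume Ω).toReal | A < (hG.stieltjesFunction.measure.rnDeriv volume σ).toReal}
  set e := (volume T).toReal
  have hA : 0 ≤ A := mul_nonneg (by positivity)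
    (intervalIntegral.integral_nonneg ht.le fun τ _ => rearr_nonneg τ)
  have hT : MeasurableSet T := measurableSet_Ioo.inter
    (measurableSet_lt measurable_const (Measure.measurable_rnDeriv _ _).ennreal_toReal)
  have hT_top : volume T ≠ ∞ :=
    ne_top_of_le_ne_top measure_Ioo_lt_top.ne (measure_mono fun _ h => h.1)
  by_contra! hte
  have hT₀ : volume T ≠ 0 := fun h => by simp [e, h] at hte; linarith
  have hint_e : ∫ τ in (0 : ℝ)..e, rearr Ω g τ ≤ e * A := by
    have := mul_integral_le_mul_integral_of_antitoneOn (rearr_antitoneOn hΩm hg hΩ) ht hte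
      (hint e ENNReal.toReal_nonneg)
    rw [show e * A = (e * ∫ τ in (0 : ℝ)..t, rearr Ω g τ) / t by ring, le_div_iff₀ ht]
    linarith
  have := calc ENNReal.ofReal A * volume T
      < hG.stieltjesFunction.measure T :=
        ofReal_mul_lt_of_lt_rnDeriv hA hT hT₀ hT_top fun _ h => h.2
    _ ≤ ∫⁻ τ in Ioc 0 e, ENNReal.ofReal (rearr Ω g τ) :=
        stieltjesFunction_measure_le_lintegral_rearr hΩm hg hΩ
          (integrableOn_of_intervalIntegrable_rearr hΩm hg hΩ (hint _ ENNReal.toReal_nonneg))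
          hFm hFsub hFvol hF hG hT fun _ h => Ioo_subset_Ioc_self h.1
    _ = ENNReal.ofReal (∫ τ in (0 : ℝ)..e, rearr Ω g τ) := by
        rw [intervalIntegral.integral_of_le ENNReal.toReal_nonneg,
          ofReal_integral_eq_lintegral_ofReal (hint e ENNReal.toReal_nonneg).1
            (ae_of_all _ rearr_nonneg)]
    _ ≤ ENNReal.ofReal A * volume T := by
        rw [← ENNReal.ofReal_toReal hT_top, ← ENNReal.ofReal_mul hA, mul_comm A]
        exact ENNReal.ofReal_le_ofReal hint_e
  exact this.ne rfl

end Marcinkiewicz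

theorem stmt_8_general {N : ℕ} (Ω : Set (EuclideanSpace ℝ (Fin N)))
    (hΩm : MeasurableSet Ω) (hΩb : Bornology.IsBounded Ω)
    (g : EuclideanSpace ℝ (Fin N) → ℝ) (hgmeas : Measurable g)
    (s : ℝ) (hs : 1 < s)
    (K : ℝ)
    (hMarc : ∀ t > (0 : ℝ), t ^ (1 / s) * rearr Ω g t ≤ K)
    (F : ℝ → Set (EuclideanSpace ℝ (Fin N)))
    (hFmeas : ∀ σ, MeasurableSet (F σ))
    (hFsub : ∀ σ, F σ ⊆ Ω)
    (hFvol : ∀ σ ∈ Icc (0 : ℝ) (volume Ω).toReal, (volume (F σ)).toReal = σ)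
    (hFmono : ∀ σ₁ σ₂, σ₁ < σ₂ → F σ₁ ⊆ F σ₂)
    (D : ℝ → ℝ)
    (hD : ∀ᵐ σ ∂(volume.restrict (Ioo (0 : ℝ) (volume Ω).toReal)),
      HasDerivAt (fun τ => ∫ x in F τ, |g x|) (D σ) σ) :
    ∀ t ∈ Ioo (0 : ℝ) (volume Ω).toReal,
      rearr1 (volume Ω).toReal D t ≤ (1 / t) * (∫ τ in (0 : ℝ)..t, rearr Ω g τ) ∧
      (1 / t) * (∫ τ in (0 : ℝ)..t, rearr Ω g τ)
        ≤ K * (s / (s - 1)) * t ^ (-(1 / s)) := by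
  rintro t ⟨ht, -⟩
  have hΩ : volume Ω ≠ ∞ := hΩb.measure_lt_top.ne
  have hF : Monotone F := monotone_iff_forall_lt.2 fun a b h => hFmono a b h
  have hint b (hb : 0 ≤ b) := intervalIntegrable_rearr hΩm hgmeas hΩ hs hMarc hb
  have hG := monotone_setIntegral_abs
    (integrableOn_of_intervalIntegrable_rearr hΩm hgmeas hΩ (hint _ ENNReal.toReal_nonneg)) hFsub hF
  refine ⟨csInf_le ⟨0, fun _ h => h.1⟩ ⟨mul_nonneg (by positivity)
    (intervalIntegral.integral_nonneg ht.le fun τ _ => rearr_nonneg τ), ?_⟩,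
    average_le_of_le_mul_rpow hs ht (hint t ht.le) fun τ hτ =>
      le_mul_rpow_neg_of_rpow_mul_le hτ.1 (hMarc τ hτ.1)⟩
  have hDd : ∀ᵐ σ, σ ∈ Ioo 0 (volume Ω).toReal →
      D σ = (hG.stieltjesFunction.measure.rnDeriv volume σ).toReal := by
    rw [← ae_restrict_iff' measurableSet_Ioo]
    filter_upwards [hD, ae_restrict_of_ae hG.ae_hasDerivAt] with σ h₁ h₂ using h₁.unique h₂
  refine lt_of_eq_of_lt (congrArg ENNReal.toReal (measure_congr (eventuallyEq_set.2 ?_)))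
    (volume_average_lt_rnDeriv_lt hΩm hgmeas hΩ hint hFmeas hFsub hFvol hF hG ht)
  filter_upwards [hDd] with σ hσ
  exact and_congr_right fun h => by rw [hσ h, abs_of_nonneg ENNReal.toReal_nonneg]

/-- If `g` is in the Marcinkiewicz space `M^s`, so is its pseudo-rearrangement `D`,
with `D̄(t) ≤ (1/t)∫₀ᵗ ḡ ≤ ‖g‖_{M^s}·(s/(s−1))·t^{−1/s}`. -/
theorem stmt_8 {N : ℕ} (Ω : Set (EuclideanSpace ℝ (Fin N)))
    (hΩm : MeasurableSet Ω) (hΩb : Bornology.IsBounded Ω)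
    (v : EuclideanSpace ℝ (Fin N) → ℝ) (hv : Measurable v)
    (g : EuclideanSpace ℝ (Fin N) → ℝ) (hgmeas : Measurable g)
    (s : ℝ) (hs : 1 < s)
    (K : ℝ) (hK : 0 ≤ K)
    (hMarc : ∀ t > (0 : ℝ), t ^ (1 / s) * rearr Ω g t ≤ K)
    (F : ℝ → Set (EuclideanSpace ℝ (Fin N)))
    (hFmeas : ∀ σ, MeasurableSet (F σ))
    (hFsub : ∀ σ, F σ ⊆ Ω)
    (hFvol : ∀ σ ∈ Icc (0 : ℝ) (volume Ω).toReal, (volume (F σ)).toReal = σ)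
    (hFmono : ∀ σ₁ σ₂, σ₁ < σ₂ → F σ₁ ⊆ F σ₂)
    (D : ℝ → ℝ)
    (hD : ∀ᵐ σ ∂(volume.restrict (Ioo (0 : ℝ) (volume Ω).toReal)),
      HasDerivAt (fun τ => ∫ x in F τ, |g x|) (D σ) σ) :
    ∀ t ∈ Ioo (0 : ℝ) (volume Ω).toReal,
      rearr1 (volume Ω).toReal D t ≤ (1 / t) * (∫ τ in (0 : ℝ)..t, rearr Ω g τ) ∧
      (1 / t) * (∫ τ in (0 : ℝ)..t, rearr Ω g τ)
        ≤ K * (s / (s - 1)) * t ^ (-(1 / s)) :=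
  stmt_8_general Ω hΩm hΩb g hgmeas s hs K hMarc F hFmeas hFsub hFvol hFmono D hD
end

section
/- (Hardy-type inequality for decreasing functions.) Let r : (0,∞) → (0,∞) be decreasing, β ≥ 0, δ ≠ 1, λ > 0, and define R_δ(t) = ∫₀ᵗ s^β r(s) ds if δ < 1 and R_δ(t) = ∫_t^∞ s^β r(s) ds if δ > 1. Then there exists a constant C = C(β,δ,λ) such that ∫₀^∞ (R_δ(t)/t)^λ t^{δλ} dt/t ≤ C ∫₀^∞ r(t)^λ t^{λ(β+δ)} dt/t. -/
/-!
Write `R(t) = ∫_{dom t} s^β r(s) ds` with `dom t = (0, t]` (`δ < 1`) or `(t, ∞)` (`δ > 1`), and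
`φ(u) = u^(β+1) r(u)`.  Covering `dom t` by dyadic pieces `(c_k t, 2 c_k t]`, `c_k = 2^(-k)` resp.
`2^k`, monotonicity of `r` gives `R(t) ≤ 2^β ∑_k φ(c_k t)`.  A weighted power-sum inequality
`(∑ a_k)^λ ≤ C ∑ 2^(εk) a_k^λ` (subadditivity for `λ ≤ 1`, Hölder for `λ > 1`) and the dilation
`t ↦ c_k t` in `∫ φ(t)^λ t^E dt`, `E = λ(δ-1) - 1`, bound the left-hand side by
`∑_k 2^(εk) c_k^(-λ(δ-1))` times the right-hand side; for small `ε` this series is geometric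
because `δ ≠ 1`.

The integrals are Bochner integrals, which vanish on non-integrable functions.  A single dyadic
piece gives the reverse bound `∫ φ^λ t^E ≲ ∫ R^λ t^E`, so the right-hand side is integrable
whenever the left-hand side is; and if `s^β r(s)` is not integrable on some `dom t`, it is
integrable on none, so `R = 0` and the left-hand side vanishes.
-/

open MeasureTheory Set ENNReal

theorem ENNReal.rpow_finsetSum_le_sum_rpow {ι : Type*} {p : ℝ} (hp0 : 0 < p) (hp1 : p ≤ 1)
    (s : Finset ι) (a : ι → ℝ≥0∞) : (∑ i ∈ s, a i) ^ p ≤ ∑ i ∈ s, a i ^ p := by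
  classical
  induction s using Finset.induction with
  | empty => simp [hp0]
  | insert i s hi ih =>
    rw [Finset.sum_insert hi, Finset.sum_insert hi]
    exact (rpow_add_le_add_rpow _ _ hp0.le hp1).trans (by gcongr)

theorem ENNReal.rpow_tsum_le_tsum_rpow {ι : Type*} {p : ℝ} (hp0 : 0 < p) (hp1 : p ≤ 1)
    (a : ι → ℝ≥0∞) : (∑' i, a i) ^ p ≤ ∑' i, a i ^ p := by
  rw [ENNReal.tsum_eq_iSup_sum, ← orderIsoRpow_apply p hp0, OrderIso.map_iSup]
  exact iSup_le fun s => (rpow_finsetSum_le_sum_rpow hp0 hp1 s a).trans (ENNReal.sum_le_tsum s)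

theorem ENNReal.tsum_two_rpow_mul_ne_top {a : ℝ} (ha : a < 0) :
    ∑' k : ℕ, (2 : ℝ≥0∞) ^ (a * k) ≠ ∞ := by
  have hq : (2 : ℝ≥0∞) ^ a < 1 := rpow_lt_one_of_one_lt_of_neg one_lt_two ha
  simp_rw [rpow_mul, rpow_natCast]
  rw [ENNReal.tsum_geometric]
  exact ENNReal.inv_ne_top.2 (tsub_pos_of_lt hq).ne'

theorem ENNReal.rpow_tsum_le_mul_tsum_two_rpow_mul {p : ℝ} (hp1 : 1 < p) (ε : ℝ)
    (a : ℕ → ℝ≥0∞) :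
    (∑' k, a k) ^ p
      ≤ (∑' k : ℕ, (2 : ℝ≥0∞) ^ (-(ε * p.conjExponent / p) * k)) ^ (p / p.conjExponent)
        * ∑' k : ℕ, (2 : ℝ≥0∞) ^ (ε * k) * a k ^ p := by
  have hp : 0 < p := by linarith
  set q := p.conjExponent
  have hpq : q.HolderConjugate p := (Real.HolderConjugate.conjExponent hp1).symm
  -- Hölder for the counting measure, after writing `a k = 2^(-ε k / p) * (2^(ε k / p) * a k)`
  have holder := ENNReal.lintegral_mul_le_Lp_mul_Lq Measure.count hpq
    (f := fun k : ℕ => (2 : ℝ≥0∞) ^ (-(ε / p) * k))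
    (g := fun k : ℕ => (2 : ℝ≥0∞) ^ (ε / p * k) * a k)
    (measurable_of_countable _).aemeasurable (measurable_of_countable _).aemeasurable
  simp only [lintegral_count] at holder
  have hsplit : ∀ k : ℕ, a k = (2 : ℝ≥0∞) ^ (-(ε / p) * k) * ((2 : ℝ≥0∞) ^ (ε / p * k) * a k) := by
    intro k
    rw [← mul_assoc, ← rpow_add _ _ two_ne_zero ofNat_ne_top, neg_mul, neg_add_cancel, rpow_zero,
      one_mul]
  have hf : ∀ k : ℕ, ((2 : ℝ≥0∞) ^ (-(ε / p) * k)) ^ q = (2 : ℝ≥0∞) ^ (-(ε * q / p) * k) := by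
    intro k
    rw [← rpow_mul]
    ring_nf
  have hg : ∀ k : ℕ, ((2 : ℝ≥0∞) ^ (ε / p * k) * a k) ^ p = (2 : ℝ≥0∞) ^ (ε * k) * a k ^ p := by
    intro k
    rw [mul_rpow_of_nonneg _ _ hp.le, ← rpow_mul]
    field_simp
  calc (∑' k, a k) ^ p
      ≤ ((∑' k : ℕ, (2 : ℝ≥0∞) ^ (-(ε * q / p) * k)) ^ (1 / q)
          * (∑' k : ℕ, (2 : ℝ≥0∞) ^ (ε * k) * a k ^ p) ^ (1 / p)) ^ p := by
        rw [tsum_congr hsplit]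
        simp_rw [hf, hg] at holder
        gcongr
        exact holder
    _ = _ := by
        rw [mul_rpow_of_nonneg _ _ hp.le, ← rpow_mul, ← rpow_mul, one_div_mul_cancel hp.ne',
          rpow_one, one_div_mul_eq_div]

theorem ENNReal.exists_rpow_tsum_le_mul_tsum_two_rpow_mul {p ε : ℝ} (hp : 0 < p) (hε : 0 < ε) :
    ∃ C : ℝ≥0∞, C ≠ ∞ ∧ ∀ a : ℕ → ℝ≥0∞,
      (∑' k, a k) ^ p ≤ C * ∑' k : ℕ, (2 : ℝ≥0∞) ^ (ε * k) * a k ^ p := by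
  rcases le_or_gt p 1 with hp1 | hp1
  · refine ⟨1, one_ne_top, fun a => ?_⟩
    rw [one_mul]
    refine (rpow_tsum_le_tsum_rpow hp hp1 a).trans (ENNReal.tsum_le_tsum fun k => ?_)
    refine le_mul_of_one_le_left' ?_
    simpa using rpow_le_rpow_of_exponent_le one_le_two (by positivity : (0 : ℝ) ≤ ε * k)
  · have hq : 0 < p.conjExponent := (Real.HolderConjugate.conjExponent hp1).symm.pos
    refine ⟨_, rpow_ne_top_of_nonneg (by positivity) (tsum_two_rpow_mul_ne_top ?_),
      rpow_tsum_le_mul_tsum_two_rpow_mul hp1 ε⟩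
    have : 0 < ε * p.conjExponent / p := by positivity
    linarith

theorem lintegral_Ioi_comp_mul_left (g : ℝ → ℝ≥0∞) {c : ℝ} (hc : 0 < c) :
    ∫⁻ t in Ioi 0, g (c * t) = ENNReal.ofReal c⁻¹ * ∫⁻ u in Ioi 0, g u := by
  have hemb : MeasurableEmbedding (c * ·) := (Homeomorph.mulLeft₀ c hc.ne').measurableEmbedding
  have hpre : (c * ·) ⁻¹' Ioi 0 = Ioi (0 : ℝ) := by
    ext x
    simp [mul_pos_iff_of_pos_left hc]
  rw [← hemb.lintegral_map, ← hpre, ← Measure.restrict_map hemb.measurable measurableSet_Ioi,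
    Real.map_volume_mul_left hc.ne', hpre, Measure.restrict_smul, lintegral_smul_measure,
    abs_inv, abs_of_pos hc, smul_eq_mul]

theorem lintegral_Ioi_comp_mul_left_mul_rpow (g : ℝ → ℝ≥0∞) {c : ℝ} (hc : 0 < c) (E : ℝ) :
    ∫⁻ t in Ioi 0, g (c * t) * ENNReal.ofReal t ^ E
      = ENNReal.ofReal c ^ (-(E + 1)) * ∫⁻ u in Ioi 0, g u * ENNReal.ofReal u ^ E := by
  have hc' : ENNReal.ofReal c ≠ 0 := (ENNReal.ofReal_pos.2 hc).ne'
  have hdiv : ∀ u, ENNReal.ofReal (u / c) ^ E = ENNReal.ofReal c ^ (-E) * ENNReal.ofReal u ^ E := by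
    intro u
    rw [div_eq_mul_inv, ENNReal.ofReal_mul' (inv_nonneg.2 hc.le), ENNReal.ofReal_inv_of_pos hc,
      mul_rpow_of_ne_top ofReal_ne_top (inv_ne_top.2 hc'), inv_rpow, ← rpow_neg, mul_comm]
  have := lintegral_Ioi_comp_mul_left (fun u => g u * ENNReal.ofReal (u / c) ^ E) hc
  simp only [mul_div_cancel_left₀ _ hc.ne', hdiv, mul_left_comm (g _)] at this
  rw [this, lintegral_const_mul' _ _ (rpow_ne_top_of_ne_zero hc' ofReal_ne_top), ← mul_assoc,
    ENNReal.ofReal_inv_of_pos hc, ← rpow_neg_one, ← rpow_add _ _ hc' ofReal_ne_top, neg_add_rev]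

theorem exists_two_zpow_mul_lt_le {s t : ℝ} (hs : 0 < s) (ht : 0 < t) :
    ∃ n : ℤ, (2 : ℝ) ^ n * t < s ∧ s ≤ 2 * ((2 : ℝ) ^ n * t) := by
  obtain ⟨n, hn1, hn2⟩ := exists_mem_Ioc_zpow (div_pos hs ht) one_lt_two
  refine ⟨n, (lt_div_iff₀ ht).1 hn1, ?_⟩
  rwa [div_le_iff₀ ht, zpow_add_one₀ two_ne_zero, mul_comm _ (2 : ℝ), mul_assoc] at hn2

theorem Ioc_zero_subset_iUnion_Ioc {t : ℝ} (ht : 0 < t) :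
    Ioc 0 t ⊆ ⋃ k : ℕ, Ioc ((2 : ℝ) ^ (-1 * k : ℝ) * t) (2 * ((2 : ℝ) ^ (-1 * k : ℝ) * t)) := by
  intro s ⟨hs0, hst⟩
  obtain ⟨n, hn1, hn2⟩ := exists_two_zpow_mul_lt_le hs0 ht
  have hn : n ≤ 0 := by
    by_contra! hn
    nlinarith [one_le_zpow₀ (one_le_two (α := ℝ)) hn.le]
  have hk : (2 : ℝ) ^ (-1 * ((-n).toNat : ℕ) : ℝ) = 2 ^ n := by
    rw [← Real.rpow_intCast]
    rw [← Int.cast_natCast, Int.toNat_of_nonneg (neg_nonneg.2 hn)]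
    push_cast
    ring_nf
  exact mem_iUnion.2 ⟨(-n).toNat, by rw [hk]; exact ⟨hn1, hn2⟩⟩

theorem Ioi_subset_iUnion_Ioc {t : ℝ} (ht : 0 < t) :
    Ioi t ⊆ ⋃ k : ℕ, Ioc ((2 : ℝ) ^ (1 * k : ℝ) * t) (2 * ((2 : ℝ) ^ (1 * k : ℝ) * t)) := by
  intro s (hs : t < s)
  obtain ⟨n, hn1, hn2⟩ := exists_two_zpow_mul_lt_le (ht.trans hs) ht
  have hn : 0 ≤ n := by
    by_contra! hn
    have : (2 : ℝ) * 2 ^ n ≤ 1 := by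
      rw [← zpow_one_add₀ two_ne_zero]
      exact zpow_le_one_of_nonpos₀ one_le_two (by lia)
    nlinarith
  have hk : (2 : ℝ) ^ (1 * (n.toNat : ℕ) : ℝ) = 2 ^ n := by
    rw [← Real.rpow_intCast, one_mul, ← Int.cast_natCast, Int.toNat_of_nonneg hn]
  exact mem_iUnion.2 ⟨n.toNat, by rw [hk]; exact ⟨hn1, hn2⟩⟩

theorem Ioc_zero_subset_union_Icc (t t' : ℝ) :
    Ioc 0 t ⊆ Ioc 0 t' ∪ Icc (min t t') (max t t') := fun s hs => by
  rcases le_or_gt s t' with h | h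
  · exact Or.inl ⟨hs.1, h⟩
  · exact Or.inr ⟨(min_le_right _ _).trans h.le, hs.2.trans (le_max_left _ _)⟩

theorem Ioi_subset_union_Icc (t t' : ℝ) :
    Ioi t ⊆ Ioi t' ∪ Icc (min t t') (max t t') := fun s (hs : t < s) => by
  rcases lt_or_ge t' s with h | h
  · exact Or.inl h
  · exact Or.inr ⟨(min_le_left _ _).trans hs.le, h.trans (le_max_right _ _)⟩

section
variable {β lam E : ℝ} {r : ℝ → ℝ}

theorem setLIntegral_Ioc_two_mul_le (hβ : 0 ≤ β) (hr : AntitoneOn r (Ioi 0))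
    (hr0 : ∀ t > 0, 0 ≤ r t) {a : ℝ} (ha : 0 < a) :
    ∫⁻ s in Ioc a (2 * a), ENNReal.ofReal (s ^ β * r s)
      ≤ ENNReal.ofReal (2 ^ β) * ENNReal.ofReal (a ^ (β + 1) * r a) := by
  have hra := hr0 a ha
  calc ∫⁻ s in Ioc a (2 * a), ENNReal.ofReal (s ^ β * r s)
      ≤ ∫⁻ _ in Ioc a (2 * a), ENNReal.ofReal ((2 * a) ^ β * r a) := by
        refine setLIntegral_mono' measurableSet_Ioc fun s hs => ENNReal.ofReal_le_ofReal ?_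
        have hs0 : 0 < s := ha.trans hs.1
        exact mul_le_mul (Real.rpow_le_rpow hs0.le hs.2 hβ) (hr ha hs0 hs.1.le) (hr0 s hs0)
          (by positivity)
    _ = ENNReal.ofReal (2 ^ β) * ENNReal.ofReal (a ^ (β + 1) * r a) := by
        rw [setLIntegral_const, Real.volume_Ioc, ← ENNReal.ofReal_mul (by positivity),
          ← ENNReal.ofReal_mul (by positivity), Real.mul_rpow zero_le_two ha.le,
          Real.rpow_add_one ha.ne']
        ring_nf

theorem ofReal_le_setLIntegral_Ioc_two_mul (hβ : 0 ≤ β) (hr : AntitoneOn r (Ioi 0))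
    (hr0 : ∀ t > 0, 0 ≤ r t) {a : ℝ} (ha : 0 < a) :
    ENNReal.ofReal ((2 * a) ^ (β + 1) * r (2 * a))
      ≤ ENNReal.ofReal (2 ^ (β + 1)) * ∫⁻ s in Ioc a (2 * a), ENNReal.ofReal (s ^ β * r s) := by
  have h2a : 0 < 2 * a := by positivity
  have hra := hr0 _ h2a
  calc ENNReal.ofReal ((2 * a) ^ (β + 1) * r (2 * a))
      = ENNReal.ofReal (2 ^ (β + 1))
          * ∫⁻ _ in Ioc a (2 * a), ENNReal.ofReal (a ^ β * r (2 * a)) := by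
        rw [setLIntegral_const, Real.volume_Ioc, ← ENNReal.ofReal_mul (by positivity),
          ← ENNReal.ofReal_mul (by positivity), Real.mul_rpow zero_le_two ha.le,
          Real.rpow_add_one ha.ne', Real.rpow_add_one two_ne_zero]
        ring_nf
    _ ≤ ENNReal.ofReal (2 ^ (β + 1)) * ∫⁻ s in Ioc a (2 * a), ENNReal.ofReal (s ^ β * r s) := by
        gcongr 1
        refine setLIntegral_mono' measurableSet_Ioc fun s hs => ENNReal.ofReal_le_ofReal ?_
        have hs0 : 0 < s := ha.trans hs.1
        exact mul_le_mul (Real.rpow_le_rpow ha.le hs.1.le hβ) (hr hs0 h2a hs.2) hra (by positivity)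

theorem setLIntegral_rpow_mul_le_tsum (hβ : 0 ≤ β) (hr : AntitoneOn r (Ioi 0))
    (hr0 : ∀ t > 0, 0 ≤ r t) {c : ℕ → ℝ} (hc : ∀ k, 0 < c k) {t : ℝ} (ht : 0 < t) {D : Set ℝ}
    (hD : D ⊆ ⋃ k, Ioc (c k * t) (2 * (c k * t))) :
    ∫⁻ s in D, ENNReal.ofReal (s ^ β * r s)
      ≤ ENNReal.ofReal (2 ^ β) * ∑' k, ENNReal.ofReal ((c k * t) ^ (β + 1) * r (c k * t)) :=
  calc _ ≤ ∫⁻ s in ⋃ k, Ioc (c k * t) (2 * (c k * t)), ENNReal.ofReal (s ^ β * r s) :=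
        lintegral_mono_set hD
    _ ≤ ∑' k, ∫⁻ s in Ioc (c k * t) (2 * (c k * t)), ENNReal.ofReal (s ^ β * r s) :=
        lintegral_iUnion_le _ _
    _ ≤ ∑' k, ENNReal.ofReal (2 ^ β) * ENNReal.ofReal ((c k * t) ^ (β + 1) * r (c k * t)) :=
        ENNReal.tsum_le_tsum fun k => setLIntegral_Ioc_two_mul_le hβ hr hr0 (mul_pos (hc k) ht)
    _ = _ := ENNReal.tsum_mul_left

theorem aemeasurable_comp_mul_left_of_antitoneOn (hr : AntitoneOn r (Ioi 0)) {c : ℝ} (hc : 0 < c) :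
    AEMeasurable (fun t => r (c * t)) (volume.restrict (Ioi 0)) :=
  aemeasurable_restrict_of_antitoneOn measurableSet_Ioi fun _ hx _ hy hxy =>
    hr (mul_pos hc hx) (mul_pos hc hy) (by gcongr)

theorem lintegral_hardy_le_of_cover (hβ : 0 ≤ β) (hlam : 0 < lam) {ε : ℝ} {C₀ : ℝ≥0∞}
    (hC₀ : ∀ a : ℕ → ℝ≥0∞, (∑' k, a k) ^ lam ≤ C₀ * ∑' k : ℕ, (2 : ℝ≥0∞) ^ (ε * k) * a k ^ lam)
    {c : ℕ → ℝ} (hc : ∀ k, 0 < c k) {dom : ℝ → Set ℝ}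
    (hdom : ∀ t > 0, dom t ⊆ ⋃ k, Ioc (c k * t) (2 * (c k * t)))
    (hr : AntitoneOn r (Ioi 0)) (hr0 : ∀ t > 0, 0 ≤ r t) :
    ∫⁻ t in Ioi 0, (∫⁻ s in dom t, ENNReal.ofReal (s ^ β * r s)) ^ lam * ENNReal.ofReal t ^ E
      ≤ C₀ * ENNReal.ofReal (2 ^ β) ^ lam
        * (∑' k : ℕ, (2 : ℝ≥0∞) ^ (ε * k) * ENNReal.ofReal (c k) ^ (-(E + 1)))
        * ∫⁻ u in Ioi 0, ENNReal.ofReal (u ^ (β + 1) * r u) ^ lam * ENNReal.ofReal u ^ E := by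
  set x : ℕ → ℝ → ℝ≥0∞ := fun k t => ENNReal.ofReal ((c k * t) ^ (β + 1) * r (c k * t))
  have hmeas : ∀ k : ℕ, AEMeasurable (fun t => x k t ^ lam * ENNReal.ofReal t ^ E)
      (volume.restrict (Ioi 0)) := fun k => by
    have hx : AEMeasurable (x k) (volume.restrict (Ioi 0)) :=
      ENNReal.measurable_ofReal.comp_aemeasurable ((by fun_prop : Measurable fun t : ℝ =>
        (c k * t) ^ (β + 1)).aemeasurable.mul (aemeasurable_comp_mul_left_of_antitoneOn hr (hc k)))
    exact ((hx.pow_const lam).mul (by fun_prop : Measurable fun t : ℝ =>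
      ENNReal.ofReal t ^ E).aemeasurable)
  calc ∫⁻ t in Ioi 0, (∫⁻ s in dom t, ENNReal.ofReal (s ^ β * r s)) ^ lam * ENNReal.ofReal t ^ E
      ≤ ∫⁻ t in Ioi 0, C₀ * ENNReal.ofReal (2 ^ β) ^ lam
          * ∑' k : ℕ, (2 : ℝ≥0∞) ^ (ε * k) * (x k t ^ lam * ENNReal.ofReal t ^ E) := by
        refine setLIntegral_mono' measurableSet_Ioi fun t ht => ?_
        calc _ ≤ (ENNReal.ofReal (2 ^ β) * ∑' k, x k t) ^ lam * ENNReal.ofReal t ^ E := by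
              gcongr
              exact setLIntegral_rpow_mul_le_tsum hβ hr hr0 hc ht (hdom t ht)
          _ ≤ ENNReal.ofReal (2 ^ β) ^ lam
                * (C₀ * ∑' k : ℕ, (2 : ℝ≥0∞) ^ (ε * k) * x k t ^ lam) * ENNReal.ofReal t ^ E := by
              rw [mul_rpow_of_nonneg _ _ hlam.le]
              gcongr
              exact hC₀ _
          _ = C₀ * ENNReal.ofReal (2 ^ β) ^ lam
                * ((∑' k : ℕ, (2 : ℝ≥0∞) ^ (ε * k) * x k t ^ lam) * ENNReal.ofReal t ^ E) := by
              ring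
          _ = _ := by
              rw [← ENNReal.tsum_mul_right]
              simp_rw [mul_assoc]
    _ = C₀ * ENNReal.ofReal (2 ^ β) ^ lam
          * ∑' k : ℕ, (2 : ℝ≥0∞) ^ (ε * k) * ∫⁻ t in Ioi 0, x k t ^ lam * ENNReal.ofReal t ^ E := by
        rw [lintegral_const_mul'' _ (AEMeasurable.tsum fun k => (hmeas k).const_mul _),
          lintegral_tsum fun k => (hmeas k).const_mul _]
        simp_rw [lintegral_const_mul'' _ (hmeas _)]
    _ = _ := by
        simp_rw [x, lintegral_Ioi_comp_mul_left_mul_rpow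
          (fun u => ENNReal.ofReal (u ^ (β + 1) * r u) ^ lam) (hc _), ← mul_assoc,
          ENNReal.tsum_mul_right, mul_assoc]

theorem exists_lintegral_hardy_le (hβ : 0 ≤ β) (hlam : 0 < lam) {σ : ℝ} (hσ : 0 < σ * (E + 1))
    {dom : ℝ → Set ℝ}
    (hdom : ∀ t > 0, dom t ⊆ ⋃ k : ℕ, Ioc ((2 : ℝ) ^ (σ * k) * t) (2 * ((2 : ℝ) ^ (σ * k) * t))) :
    ∃ C > 0, ∀ r : ℝ → ℝ, AntitoneOn r (Ioi 0) → (∀ t > 0, 0 ≤ r t) →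
      ∫⁻ t in Ioi 0, (∫⁻ s in dom t, ENNReal.ofReal (s ^ β * r s)) ^ lam * ENNReal.ofReal t ^ E
        ≤ ENNReal.ofReal C
          * ∫⁻ u in Ioi 0, ENNReal.ofReal (u ^ (β + 1) * r u) ^ lam * ENNReal.ofReal u ^ E := by
  set ε := σ * (E + 1) / 2 with hε
  have hε0 : 0 < ε := half_pos hσ
  obtain ⟨C₀, hC₀, hpow⟩ := exists_rpow_tsum_le_mul_tsum_two_rpow_mul hlam hε0
  have hgeom : ∀ k : ℕ, (2 : ℝ≥0∞) ^ (ε * k) * ENNReal.ofReal ((2 : ℝ) ^ (σ * k)) ^ (-(E + 1))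
      = (2 : ℝ≥0∞) ^ (-ε * k) := fun k => by
    rw [← ofReal_rpow_of_pos two_pos, ofReal_ofNat, ← rpow_mul,
      ← rpow_add _ _ two_ne_zero ofNat_ne_top, hε]
    ring_nf
  set C' := C₀ * ENNReal.ofReal (2 ^ β) ^ lam
    * ∑' k : ℕ, (2 : ℝ≥0∞) ^ (ε * k) * ENNReal.ofReal ((2 : ℝ) ^ (σ * k)) ^ (-(E + 1))
  have hC' : C' ≠ ∞ := by
    refine mul_ne_top (mul_ne_top hC₀ (rpow_ne_top_of_nonneg hlam.le ofReal_ne_top)) ?_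
    rw [tsum_congr hgeom]
    exact tsum_two_rpow_mul_ne_top (by linarith)
  refine ⟨C'.toReal + 1, by positivity, fun r hr hr0 =>
    (lintegral_hardy_le_of_cover hβ hlam hpow (fun k => by positivity) hdom hr hr0).trans ?_⟩
  gcongr
  exact (le_ofReal_iff_toReal_le hC' (by positivity)).2 (le_add_of_nonneg_right zero_le_one)

theorem lintegral_le_lintegral_hardy_of_subset (hβ : 0 ≤ β) (hlam : 0 < lam) {c : ℝ} (hc : 0 < c)
    {dom : ℝ → Set ℝ} (hdom : ∀ t > 0, Ioc (c * t) (2 * (c * t)) ⊆ dom t)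
    (hr : AntitoneOn r (Ioi 0)) (hr0 : ∀ t > 0, 0 ≤ r t) :
    ∫⁻ u in Ioi 0, ENNReal.ofReal (u ^ (β + 1) * r u) ^ lam * ENNReal.ofReal u ^ E
      ≤ ENNReal.ofReal (2 * c) ^ (E + 1) * ENNReal.ofReal (2 ^ (β + 1)) ^ lam
        * ∫⁻ t in Ioi 0, (∫⁻ s in dom t, ENNReal.ofReal (s ^ β * r s)) ^ lam
          * ENNReal.ofReal t ^ E := by
  have h2c : ENNReal.ofReal (2 * c) ≠ 0 := (ENNReal.ofReal_pos.2 (by positivity)).ne'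
  set M := ENNReal.ofReal (2 ^ (β + 1))
  calc ∫⁻ u in Ioi 0, ENNReal.ofReal (u ^ (β + 1) * r u) ^ lam * ENNReal.ofReal u ^ E
      = ENNReal.ofReal (2 * c) ^ (E + 1) * (ENNReal.ofReal (2 * c) ^ (-(E + 1))
          * ∫⁻ u in Ioi 0, ENNReal.ofReal (u ^ (β + 1) * r u) ^ lam * ENNReal.ofReal u ^ E) := by
        rw [← mul_assoc, ← rpow_add _ _ h2c ofReal_ne_top, add_neg_cancel, rpow_zero, one_mul]
    _ = ENNReal.ofReal (2 * c) ^ (E + 1) * ∫⁻ t in Ioi 0,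
          ENNReal.ofReal ((2 * c * t) ^ (β + 1) * r (2 * c * t)) ^ lam * ENNReal.ofReal t ^ E := by
        rw [lintegral_Ioi_comp_mul_left_mul_rpow
          (fun u => ENNReal.ofReal (u ^ (β + 1) * r u) ^ lam) (by positivity)]
    _ ≤ ENNReal.ofReal (2 * c) ^ (E + 1) * ∫⁻ t in Ioi 0,
          M ^ lam * ((∫⁻ s in dom t, ENNReal.ofReal (s ^ β * r s)) ^ lam
            * ENNReal.ofReal t ^ E) := by
        gcongr 1
        refine setLIntegral_mono' measurableSet_Ioi fun t (ht : 0 < t) => ?_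
        rw [← mul_assoc, ← mul_rpow_of_nonneg _ _ hlam.le, mul_assoc]
        gcongr 2
        exact (ofReal_le_setLIntegral_Ioc_two_mul hβ hr hr0 (mul_pos hc ht)).trans
          (by gcongr; exact hdom t ht)
    _ = _ := by
        rw [lintegral_const_mul' _ _ (rpow_ne_top_of_nonneg hlam.le ofReal_ne_top), mul_assoc]

theorem exists_lintegral_le_lintegral_hardy (hβ : 0 ≤ β) (hlam : 0 < lam) {c : ℝ} (hc : 0 < c)
    {dom : ℝ → Set ℝ} (hdom : ∀ t > 0, Ioc (c * t) (2 * (c * t)) ⊆ dom t) :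
    ∃ K : ℝ≥0∞, K ≠ ∞ ∧ ∀ r : ℝ → ℝ, AntitoneOn r (Ioi 0) → (∀ t > 0, 0 ≤ r t) →
      ∫⁻ u in Ioi 0, ENNReal.ofReal (u ^ (β + 1) * r u) ^ lam * ENNReal.ofReal u ^ E
        ≤ K * ∫⁻ t in Ioi 0, (∫⁻ s in dom t, ENNReal.ofReal (s ^ β * r s)) ^ lam
          * ENNReal.ofReal t ^ E :=
  ⟨_, mul_ne_top (rpow_ne_top_of_ne_zero (ENNReal.ofReal_pos.2 (by positivity)).ne' ofReal_ne_top)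
    (rpow_ne_top_of_nonneg hlam.le ofReal_ne_top),
    fun _ hr hr0 => lintegral_le_lintegral_hardy_of_subset hβ hlam hc hdom hr hr0⟩

theorem integrableOn_rpow_mul_Icc (hr : AntitoneOn r (Ioi 0)) {a b : ℝ}
    (ha : 0 < a) : IntegrableOn (fun s => s ^ β * r s) (Icc a b) := by
  have hsub : Icc a b ⊆ Ioi 0 := fun s hs => ha.trans_le hs.1
  exact ((hr.mono hsub).integrableOn_isCompact isCompact_Icc).continuousOn_mul
    (fun s hs => (Real.continuousAt_rpow_const _ _ (Or.inl (hsub hs).ne')).continuousWithinAt)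
    isCompact_Icc

theorem setIntegral_rpow_mul_eq_zero_of_not_integrableOn (hr : AntitoneOn r (Ioi 0))
    {dom : ℝ → Set ℝ} (hstep : ∀ t > 0, ∀ t' > 0, dom t ⊆ dom t' ∪ Icc (min t t') (max t t'))
    {t₀ : ℝ} (ht₀ : 0 < t₀) (hnot : ¬ IntegrableOn (fun s => s ^ β * r s) (dom t₀))
    {t : ℝ} (ht : 0 < t) : ∫ s in dom t, s ^ β * r s = 0 :=
  integral_undef fun h => hnot <|
    (IntegrableOn.union h (integrableOn_rpow_mul_Icc hr (lt_min ht₀ ht))).mono_set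
      (hstep t₀ ht₀ t ht)

end

theorem integral_le_mul_integral_of_lintegral_le {α : Type*} [MeasurableSpace α] {μ : Measure α}
    {f g : α → ℝ} (hf : 0 ≤ᵐ[μ] f) (hg : 0 ≤ᵐ[μ] g) (hgm : AEStronglyMeasurable g μ)
    {C : ℝ} (hC : 0 ≤ C) {K : ℝ≥0∞} (hK : K ≠ ∞)
    (hfg : ∫⁻ x, ENNReal.ofReal (f x) ∂μ ≤ ENNReal.ofReal C * ∫⁻ x, ENNReal.ofReal (g x) ∂μ)
    (hgf : ∫⁻ x, ENNReal.ofReal (g x) ∂μ ≤ K * ∫⁻ x, ENNReal.ofReal (f x) ∂μ) :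
    ∫ x, f x ∂μ ≤ C * ∫ x, g x ∂μ := by
  by_cases hfi : Integrable f μ
  · have hG : ∫⁻ x, ENNReal.ofReal (g x) ∂μ ≠ ∞ :=
      ne_top_of_le_ne_top (mul_ne_top hK hfi.lintegral_lt_top.ne) hgf
    rw [integral_eq_lintegral_of_nonneg_ae hf hfi.1, integral_eq_lintegral_of_nonneg_ae hg hgm,
      ← toReal_ofReal hC, ← toReal_mul]
    exact toReal_mono (mul_ne_top ofReal_ne_top hG) hfg
  · rw [integral_undef hfi]
    exact mul_nonneg hC (integral_nonneg_of_ae hg)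

theorem ofReal_div_rpow_mul_rpow_div {x t lam : ℝ} (hx : 0 ≤ x) (ht : 0 < t) (hlam : 0 ≤ lam)
    (δ : ℝ) : ENNReal.ofReal ((x / t) ^ lam * t ^ (δ * lam) / t)
      = ENNReal.ofReal x ^ lam * ENNReal.ofReal t ^ (lam * (δ - 1) - 1) := by
  rw [ofReal_rpow_of_nonneg hx hlam, ofReal_rpow_of_pos ht, ← ENNReal.ofReal_mul (by positivity),
    Real.div_rpow hx ht.le, Real.rpow_sub_one ht.ne', mul_sub, mul_one, Real.rpow_sub ht,
    mul_comm δ]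
  congr 1
  field_simp

theorem ofReal_rpow_mul_rpow_div {x t lam : ℝ} (hx : 0 ≤ x) (ht : 0 < t) (hlam : 0 ≤ lam)
    (β δ : ℝ) : ENNReal.ofReal (x ^ lam * t ^ (lam * (β + δ)) / t)
      = ENNReal.ofReal (t ^ (β + 1) * x) ^ lam * ENNReal.ofReal t ^ (lam * (δ - 1) - 1) := by
  rw [ofReal_rpow_of_nonneg (by positivity) hlam, ofReal_rpow_of_pos ht,
    ← ENNReal.ofReal_mul (by positivity), Real.mul_rpow (by positivity) hx,
    ← Real.rpow_mul ht.le, mul_div_assoc, ← Real.rpow_sub_one ht.ne']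
  congr 1
  rw [mul_right_comm, ← Real.rpow_add ht, mul_comm]
  ring_nf

theorem integral_hardy_le_of_lintegral_le {β δ lam C : ℝ} {K : ℝ≥0∞} (hlam : 0 < lam)
    (hC : 0 ≤ C) (hK : K ≠ ∞) {dom : ℝ → Set ℝ} (hmeas : ∀ t, MeasurableSet (dom t))
    (hpos : ∀ t > 0, dom t ⊆ Ioi 0)
    (hstep : ∀ t > 0, ∀ t' > 0, dom t ⊆ dom t' ∪ Icc (min t t') (max t t'))
    {r R : ℝ → ℝ} (hr0 : ∀ t > 0, 0 < r t) (hr : AntitoneOn r (Ioi 0))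
    (hR : ∀ t > 0, R t = ∫ s in dom t, s ^ β * r s)
    (hfwd : ∫⁻ t in Ioi 0, (∫⁻ s in dom t, ENNReal.ofReal (s ^ β * r s)) ^ lam
        * ENNReal.ofReal t ^ (lam * (δ - 1) - 1)
      ≤ ENNReal.ofReal C * ∫⁻ u in Ioi 0, ENNReal.ofReal (u ^ (β + 1) * r u) ^ lam
        * ENNReal.ofReal u ^ (lam * (δ - 1) - 1))
    (hrev : ∫⁻ u in Ioi 0, ENNReal.ofReal (u ^ (β + 1) * r u) ^ lam
        * ENNReal.ofReal u ^ (lam * (δ - 1) - 1)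
      ≤ K * ∫⁻ t in Ioi 0, (∫⁻ s in dom t, ENNReal.ofReal (s ^ β * r s)) ^ lam
        * ENNReal.ofReal t ^ (lam * (δ - 1) - 1)) :
    ∫ t in Ioi 0, (R t / t) ^ lam * t ^ (δ * lam) / t
      ≤ C * ∫ t in Ioi 0, r t ^ lam * t ^ (lam * (β + δ)) / t := by
  have hw0 : ∀ t > 0, ∀ s ∈ dom t, 0 ≤ s ^ β * r s := fun t ht s hs => by
    have hs0 : 0 < s := hpos t ht hs
    have := hr0 s hs0
    positivity
  have hR0 : ∀ t > 0, 0 ≤ R t := fun t ht => hR t ht ▸ setIntegral_nonneg (hmeas t) (hw0 t ht)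
  have hg0 : ∀ t ∈ Ioi (0 : ℝ), 0 ≤ r t ^ lam * t ^ (lam * (β + δ)) / t := fun t (ht : 0 < t) => by
    have := hr0 t ht
    positivity
  by_cases hint : ∀ t > 0, IntegrableOn (fun s => s ^ β * r s) (dom t)
  · have hgm : AEMeasurable (fun t => r t ^ lam * t ^ (lam * (β + δ)) / t)
        (volume.restrict (Ioi 0)) := by
      have := aemeasurable_restrict_of_antitoneOn (μ := volume) measurableSet_Ioi hr
      fun_prop
    have hF : ∫⁻ t in Ioi 0, ENNReal.ofReal ((R t / t) ^ lam * t ^ (δ * lam) / t)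
        = ∫⁻ t in Ioi 0, (∫⁻ s in dom t, ENNReal.ofReal (s ^ β * r s)) ^ lam
          * ENNReal.ofReal t ^ (lam * (δ - 1) - 1) :=
      setLIntegral_congr_fun measurableSet_Ioi fun t ht => by
        rw [ofReal_div_rpow_mul_rpow_div (hR0 t ht) ht hlam.le, hR t ht,
          ofReal_integral_eq_lintegral_ofReal (hint t ht)
            (ae_restrict_of_forall_mem (hmeas t) (hw0 t ht))]
    have hG : ∫⁻ t in Ioi 0, ENNReal.ofReal (r t ^ lam * t ^ (lam * (β + δ)) / t)
        = ∫⁻ u in Ioi 0, ENNReal.ofReal (u ^ (β + 1) * r u) ^ lam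
          * ENNReal.ofReal u ^ (lam * (δ - 1) - 1) :=
      setLIntegral_congr_fun measurableSet_Ioi fun t ht =>
        ofReal_rpow_mul_rpow_div (hr0 t ht).le ht hlam.le β δ
    refine integral_le_mul_integral_of_lintegral_le
      (ae_restrict_of_forall_mem measurableSet_Ioi fun t (ht : 0 < t) => ?_)
      (ae_restrict_of_forall_mem measurableSet_Ioi hg0) hgm.aestronglyMeasurable hC hK
      (hF ▸ hG ▸ hfwd) (hF ▸ hG ▸ hrev)
    have := hR0 t ht
    positivity
  · simp only [not_forall] at hint
    obtain ⟨t₀, ht₀, hnot⟩ := hint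
    calc ∫ t in Ioi 0, (R t / t) ^ lam * t ^ (δ * lam) / t = ∫ t in Ioi (0 : ℝ), 0 :=
          setIntegral_congr_fun measurableSet_Ioi fun t ht => by
            simp [hR t ht, setIntegral_rpow_mul_eq_zero_of_not_integrableOn hr hstep ht₀ hnot ht,
              Real.zero_rpow hlam.ne']
      _ ≤ C * ∫ t in Ioi 0, r t ^ lam * t ^ (lam * (β + δ)) / t := by
        rw [integral_zero]
        exact mul_nonneg hC (setIntegral_nonneg measurableSet_Ioi hg0)

/-- Hardy-type inequality for decreasing functions. -/
theorem stmt_11 (β δ lam : ℝ) (hβ : 0 ≤ β) (hδ : δ ≠ 1) (hlam : 0 < lam) :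
    ∃ C > (0 : ℝ), ∀ r R : ℝ → ℝ,
      (∀ t > (0 : ℝ), 0 < r t) →
      (AntitoneOn r (Ioi (0 : ℝ))) →
      (δ < 1 → ∀ t > (0 : ℝ), R t = ∫ s in (0 : ℝ)..t, s ^ β * r s) →
      (1 < δ → ∀ t > (0 : ℝ), R t = ∫ s in Ioi t, s ^ β * r s) →
      (∫ t in Ioi (0 : ℝ), (R t / t) ^ lam * t ^ (δ * lam) / t)
        ≤ C * ∫ t in Ioi (0 : ℝ), r t ^ lam * t ^ (lam * (β + δ)) / t := by
  have hlamδ : 0 < lam * |δ - 1| := mul_pos hlam (abs_pos.2 (sub_ne_zero.2 hδ))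
  rcases hδ.lt_or_gt with hδ1 | hδ1
  · rw [abs_of_neg (sub_neg.2 hδ1)] at hlamδ
    obtain ⟨C, hC, hfwd⟩ := exists_lintegral_hardy_le (E := lam * (δ - 1) - 1) (σ := -1) hβ hlam
      (by linarith) fun t ht => Ioc_zero_subset_iUnion_Ioc ht
    obtain ⟨K, hK, hrev⟩ := exists_lintegral_le_lintegral_hardy (E := lam * (δ - 1) - 1) hβ hlam
      (dom := (Ioc 0 ·)) one_half_pos fun t _ s hs => ⟨by linarith [hs.1], by linarith [hs.2]⟩
    refine ⟨C, hC, fun r R hr0 hr hR _ => integral_hardy_le_of_lintegral_le hlam hC.le hK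
      (fun _ => measurableSet_Ioc) (fun _ _ => Ioc_subset_Ioi_self)
      (fun t _ t' _ => Ioc_zero_subset_union_Icc t t') hr0 hr
      (fun t ht => by rw [hR hδ1 t ht, intervalIntegral.integral_of_le ht.le])
      (hfwd r hr fun t ht => (hr0 t ht).le) (hrev r hr fun t ht => (hr0 t ht).le)⟩
  · rw [abs_of_pos (sub_pos.2 hδ1)] at hlamδ
    obtain ⟨C, hC, hfwd⟩ := exists_lintegral_hardy_le (E := lam * (δ - 1) - 1) (σ := 1) hβ hlam
      (by linarith) fun t ht => Ioi_subset_iUnion_Ioc ht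
    obtain ⟨K, hK, hrev⟩ := exists_lintegral_le_lintegral_hardy (E := lam * (δ - 1) - 1) hβ hlam
      (dom := Ioi) one_pos fun t _ s hs => show t < s by linarith [hs.1]
    refine ⟨C, hC, fun r R hr0 hr _ hR => integral_hardy_le_of_lintegral_le hlam hC.le hK
      (fun _ => measurableSet_Ioi) (fun _ ht => Ioi_subset_Ioi ht.le)
      (fun t _ t' _ => Ioi_subset_union_Icc t t') hr0 hr (hR hδ1)
      (hfwd r hr fun t ht => (hr0 t ht).le) (hrev r hr fun t ht => (hr0 t ht).le)⟩
end
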